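/- arXiv:1701.06481 — 5 statements merged into one kernel-verified Lean document; each statement's English description precedes it below -/
import Mathlib

section
/- For an LRU cache of associativity A starting from a state filled with a set B of fp victim blocks, the number of reachable cache states under traces over B equals fp! if fp < A, and equals fp!/(fp−A)! if fp ≥ A. -/
/-- LRU update: accessed block gets age 0; blocks younger than it (or all cached
blocks on a miss) age by one; other blocks are unchanged. -/
def updLRU (A : ℕ) (b : ℕ) (c : ℕ → ℕ) : ℕ → ℕ := fun b' =>
  if b' = b then 0 else if c b' < min (c b) A then c b' + 1 else c b'

/-- FIFO update: hits leave the state unchanged; on a miss the accessed block gets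
age 0 and cached blocks age by one (the oldest is evicted). -/
def updFIFO (A : ℕ) (b : ℕ) (c : ℕ → ℕ) : ℕ → ℕ :=
  if c b < A then c
  else fun b' => if b' = b then 0 else if c b' < A then c b' + 1 else c b'

/-- Generic permutation-policy update with permutation function `P`:
on a hit, ages of cached blocks are permuted by `P (c b)`; on a miss the accessed
block gets age 0 and cached blocks age by one. -/
def updPerm (P : ℕ → ℕ → ℕ) (A : ℕ) (b : ℕ) (c : ℕ → ℕ) : ℕ → ℕ :=
  if c b < A then fun b' => if c b' < A then P (c b) (c b') else c b'
  else fun b' => if b' = b then 0 else if c b' < A then c b' + 1 else c b'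

/-- The PLRU permutation function. -/
def piPLRU (a a' : ℕ) : ℕ :=
  if _h1 : a' = a then 0
  else if _h2 : a % 2 = 0 ∧ a' % 2 = 1 then a'
  else if _h3 : a % 2 = 1 ∧ a' % 2 = 0 then a' + 1
  else 2 * piPLRU (a / 2) (a' / 2)
termination_by a + a'
decreasing_by omega

/-- The PLRU update. -/
def updPLRU (A : ℕ) : ℕ → (ℕ → ℕ) → (ℕ → ℕ) := updPerm piPLRU A

/-- Sequential application of the update function along a trace of accesses. -/
def updTrace (upd : ℕ → (ℕ → ℕ) → (ℕ → ℕ)) : List ℕ → (ℕ → ℕ) → (ℕ → ℕ)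
  | [], c => c
  | b :: t, c => updTrace upd t (upd b c)

/-- States reachable from `c₀` using traces over the set of blocks `B`. -/
def Reach (upd : ℕ → (ℕ → ℕ) → (ℕ → ℕ)) (B : Set ℕ) (c₀ : ℕ → ℕ) : Set (ℕ → ℕ) :=
  {c | ∃ t : List ℕ, (∀ b ∈ t, b ∈ B) ∧ updTrace upd t c₀ = c}

/-- Cache state invariant: ages are at most `A`, and distinct blocks have distinct
ages unless both have age `A` (uncached). -/
def CacheInv (A : ℕ) (c : ℕ → ℕ) : Prop :=
  (∀ b, c b ≤ A) ∧ ∀ b b', c b < A → c b = c b' → b = b'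

/-- `c` is filled with `B`: the blocks of `B` occupy the youngest ages
`{0, …, min (A, |B|−1)}`, and all remaining cache lines are occupied
(by attacker blocks). -/
def FilledWith (A : ℕ) (c : ℕ → ℕ) (B : Finset ℕ) : Prop :=
  CacheInv A c ∧ (∀ a, a < A → ∃ b, c b = a) ∧
    c '' ↑B = Set.Iio (min (A + 1) B.card)

/-- `c` is empty w.r.t. `B`: no block of `B` is cached, and all cache lines are
occupied (by attacker blocks). -/
def EmptyWith (A : ℕ) (c : ℕ → ℕ) (B : Finset ℕ) : Prop :=
  CacheInv A c ∧ (∀ b ∈ B, c b = A) ∧ (∀ a, a < A → ∃ b, c b = a)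

namespace AbsLRU

noncomputable def stateOf (A : ℕ) (B : Finset ℕ) (c : ℕ → ℕ) (k : ℕ) (σ : Fin k → ℕ) : ℕ → ℕ :=
  fun b => if h : ∃ i, σ i = b then ((h.choose : Fin k) : ℕ) else if b ∈ B then A else c b

variable {A : ℕ} {B : Finset ℕ} {c : ℕ → ℕ} {k : ℕ}

lemma stateOf_mem {σ : Fin k → ℕ} (hσ : Function.Injective σ) (i : Fin k) :
    stateOf A B c k σ (σ i) = i := by
  have h : ∃ j, σ j = σ i := ⟨i, rfl⟩
  simp only [stateOf, dif_pos h]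
  exact congrArg Fin.val (hσ h.choose_spec)

lemma stateOf_not_mem {σ : Fin k → ℕ} {b : ℕ} (h : ¬∃ i, σ i = b) :
    stateOf A B c k σ b = if b ∈ B then A else c b := by
  simp only [stateOf, dif_neg h]

noncomputable def pos (k b : ℕ) (τ : Fin k → ℕ) : ℕ :=
  if h : ∃ i, τ i = b then ((h.choose : Fin k) : ℕ) else k - 1

noncomputable def mtf (k b : ℕ) (τ : Fin k → ℕ) : Fin k → ℕ := fun i =>
  if (i : ℕ) = 0 then b
  else if (i : ℕ) ≤ pos k b τ then τ ⟨(i : ℕ) - 1, Nat.lt_of_le_of_lt (Nat.sub_le _ _) i.isLt⟩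
  else τ i

lemma pos_hit {τ : Fin k → ℕ} (hτ : Function.Injective τ) {p : Fin k} {b : ℕ} (hp : τ p = b) :
    pos k b τ = p := by
  have h : ∃ i, τ i = b := ⟨p, hp⟩
  simp only [pos, dif_pos h]
  exact congrArg Fin.val (hτ (h.choose_spec.trans hp.symm))

lemma pos_miss {τ : Fin k → ℕ} {b : ℕ} (h : ¬∃ i, τ i = b) : pos k b τ = k - 1 := by
  simp only [pos, dif_neg h]

lemma pos_lt {τ : Fin k → ℕ} {b : ℕ} (hk : 0 < k) : pos k b τ < k := by
  unfold pos
  split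
  next h => exact h.choose.isLt
  next => omega

lemma mtf_zero {τ : Fin k → ℕ} {b : ℕ} (i : Fin k) (h : (i : ℕ) = 0) : mtf k b τ i = b := by
  simp [mtf, h]

lemma mtf_le {τ : Fin k → ℕ} {b : ℕ} (i : Fin k) (h0 : (i : ℕ) ≠ 0)
    (h : (i : ℕ) ≤ pos k b τ) :
    mtf k b τ i = τ ⟨(i : ℕ) - 1, Nat.lt_of_le_of_lt (Nat.sub_le _ _) i.isLt⟩ := by
  simp [mtf, h0, h]

lemma mtf_gt {τ : Fin k → ℕ} {b : ℕ} (i : Fin k) (h0 : (i : ℕ) ≠ 0)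
    (h : ¬ (i : ℕ) ≤ pos k b τ) : mtf k b τ i = τ i := by
  simp [mtf, h0, h]

lemma mtf_cases {τ : Fin k → ℕ} {b : ℕ} (i : Fin k) :
    mtf k b τ i = b ∨ ∃ j : Fin k, mtf k b τ i = τ j := by
  unfold mtf
  split
  · exact Or.inl rfl
  · split
    · exact Or.inr ⟨_, rfl⟩
    · exact Or.inr ⟨_, rfl⟩

lemma mtf_mem {τ : Fin k → ℕ} {b : ℕ} (hb : b ∈ B) (hτ : ∀ i, τ i ∈ B) (i : Fin k) :
    mtf k b τ i ∈ B := by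
  rcases mtf_cases i with h | ⟨j, h⟩ <;> rw [h]
  · exact hb
  · exact hτ j

lemma mtf_inj {τ : Fin k → ℕ} {b : ℕ} (hτ : Function.Injective τ) :
    Function.Injective (mtf k b τ) := by
  intro i j hij
  apply Fin.ext
  have hi := i.isLt; have hj := j.isLt
  by_cases hhit : ∃ p, τ p = b
  · obtain ⟨p, hp⟩ := hhit
    have hpos : pos k b τ = p := pos_hit hτ hp
    have hpk := p.isLt
    subst hp
    unfold mtf at hij
    rw [hpos] at hij
    split_ifs at hij <;>
      first
      | omega
      | (have := congrArg Fin.val (hτ hij); (try simp at this); omega)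
  · have hpos : pos k b τ = k - 1 := pos_miss hhit
    unfold mtf at hij
    rw [hpos] at hij
    have hne : ∀ p : Fin k, τ p ≠ b := fun p hp => hhit ⟨p, hp⟩
    split_ifs at hij <;>
      first
      | omega
      | (have := congrArg Fin.val (hτ hij); simp at this; omega)
      | (exact absurd hij (hne _))
      | (exact absurd hij.symm (hne _))


lemma out_age (hfill : FilledWith A c B) {b' : ℕ} (hb' : b' ∉ B) :
    min A B.card ≤ c b' ∧ c b' ≤ A := by
  obtain ⟨⟨hle, hinj⟩, _, himg⟩ := hfill
  refine ⟨?_, hle b'⟩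
  by_contra h
  push_neg at h
  have hmem : c b' ∈ Set.Iio (min (A + 1) B.card) := by
    simp only [Set.mem_Iio]; omega
  rw [← himg] at hmem
  obtain ⟨b'', hb'', he⟩ := hmem
  have : b'' = b' := hinj b'' b' (by omega) he
  exact hb' (this ▸ hb'')

lemma upd_eq (hfill : FilledWith A c B) (hk : k = min A B.card) {b : ℕ} (hb : b ∈ B)
    {τ : Fin k → ℕ} (hτ : Function.Injective τ) (hmem : ∀ i, τ i ∈ B) :
    updLRU A b (stateOf A B c k τ) = stateOf A B c k (mtf k b τ) := by
  have hkA : k ≤ A := by omega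
  funext b'
  show (if b' = b then 0
    else if stateOf A B c k τ b' < min (stateOf A B c k τ b) A then stateOf A B c k τ b' + 1
    else stateOf A B c k τ b') = _
  by_cases hhit : ∃ p, τ p = b
  · obtain ⟨p, hp⟩ := hhit
    have hsb : stateOf A B c k τ b = p := hp ▸ stateOf_mem hτ p
    have hpk : (p : ℕ) < k := p.isLt
    have hpos := pos_hit hτ hp
    rw [hsb, min_eq_left (by omega)]
    by_cases hbb : b' = b
    · rw [if_pos hbb, hbb]
      have h0 : mtf k b τ ⟨0, by omega⟩ = b := mtf_zero _ rfl
      have h1 := stateOf_mem (A := A) (B := B) (c := c) (mtf_inj (b := b) hτ) ⟨0, by omega⟩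
      rw [h0] at h1
      rw [h1]
    · rw [if_neg hbb]
      by_cases hr : ∃ i, τ i = b'
      · obtain ⟨i, hi⟩ := hr
        have hsb' : stateOf A B c k τ b' = i := hi ▸ stateOf_mem hτ i
        have hip : (i : ℕ) ≠ (p : ℕ) := by
          intro h
          exact hbb (by rw [← hi, ← hp]; exact congrArg τ (Fin.ext h))
        rw [hsb']
        by_cases hlt : (i : ℕ) < (p : ℕ)
        · rw [if_pos hlt]
          have hmm : mtf k b τ ⟨(i : ℕ) + 1, by omega⟩ = b' := by
            rw [mtf_le _ (Nat.succ_ne_zero _) (by show (i : ℕ) + 1 ≤ _; rw [hpos]; omega)]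
            exact (congrArg τ (Fin.ext (by simp))).trans hi
          have h1 := stateOf_mem (A := A) (B := B) (c := c) (mtf_inj (b := b) hτ)
            ⟨(i : ℕ) + 1, by omega⟩
          rw [hmm] at h1
          rw [h1]
        · rw [if_neg hlt]
          have hmm : mtf k b τ i = b' := by
            rw [mtf_gt _ (by omega) (by rw [hpos]; omega)]
            exact hi
          have h1 := stateOf_mem (A := A) (B := B) (c := c) (mtf_inj (b := b) hτ) i
          rw [hmm] at h1
          rw [h1]
      · have hr' : ¬∃ i, mtf k b τ i = b' := by
          rintro ⟨i, hi⟩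
          rcases mtf_cases (b := b) i with h | ⟨j, h⟩
          · exact hbb (hi.symm.trans h)
          · exact hr ⟨j, h.symm.trans hi⟩
        rw [stateOf_not_mem hr, stateOf_not_mem hr']
        by_cases hB : b' ∈ B
        · simp only [if_pos hB]
          rw [if_neg (by omega)]
        · simp only [if_neg hB]
          have := out_age hfill hB
          rw [if_neg (by omega)]
  · have hbA : stateOf A B c k τ b = A := by rw [stateOf_not_mem hhit, if_pos hb]
    have hne : ∀ p : Fin k, τ p ≠ b := fun p hp => hhit ⟨p, hp⟩
    have hkA' : k = A := by
      by_contra hcon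
      have hkcard : k = B.card := by omega
      have himg : Finset.image τ Finset.univ = B := by
        apply Finset.eq_of_subset_of_card_le
        · intro x hx
          simp only [Finset.mem_image, Finset.mem_univ, true_and] at hx
          obtain ⟨i, hi⟩ := hx
          exact hi ▸ hmem i
        · rw [Finset.card_image_of_injective _ hτ, Finset.card_univ, Fintype.card_fin]
          omega
      have : b ∈ Finset.image τ Finset.univ := himg ▸ hb
      simp only [Finset.mem_image, Finset.mem_univ, true_and] at this
      exact hhit this
    rcases Nat.eq_zero_or_pos A with hA0 | hApos
    · have hk0 : k = 0 := by omega
      have e1 : ¬∃ i : Fin k, τ i = b' := by rintro ⟨i, _⟩; exact absurd i.isLt (by omega)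
      by_cases hbb : b' = b
      · have e2' : ¬∃ i : Fin k, mtf k b τ i = b := by
          rintro ⟨i, _⟩; exact absurd i.isLt (by omega)
        rw [if_pos hbb, hbb, stateOf_not_mem e2', if_pos hb]
        omega
      · have e2 : ¬∃ i : Fin k, mtf k b τ i = b' := by
          rintro ⟨i, _⟩; exact absurd i.isLt (by omega)
        rw [if_neg hbb, stateOf_not_mem e1, stateOf_not_mem e2, hbA, hA0]
        rw [if_neg (by omega)]
    · have hposm := pos_miss hhit
      rw [hbA, min_self]
      by_cases hbb : b' = b
      · rw [if_pos hbb, hbb]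
        have h0 : mtf k b τ ⟨0, by omega⟩ = b := mtf_zero _ rfl
        have h1 := stateOf_mem (A := A) (B := B) (c := c) (mtf_inj (b := b) hτ) ⟨0, by omega⟩
        rw [h0] at h1
        rw [h1]
      · rw [if_neg hbb]
        by_cases hr : ∃ i, τ i = b'
        · obtain ⟨i, hi⟩ := hr
          have hsb' : stateOf A B c k τ b' = i := hi ▸ stateOf_mem hτ i
          have hiA : (i : ℕ) < A := lt_of_lt_of_le i.isLt (le_of_eq hkA')
          rw [hsb', if_pos hiA]
          by_cases hilast : (i : ℕ) < k - 1
          · have hmm : mtf k b τ ⟨(i : ℕ) + 1, by omega⟩ = b' := by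
              rw [mtf_le _ (Nat.succ_ne_zero _) (by show (i : ℕ) + 1 ≤ _; rw [hposm]; omega)]
              exact (congrArg τ (Fin.ext (by simp))).trans hi
            have h1 := stateOf_mem (A := A) (B := B) (c := c) (mtf_inj (b := b) hτ)
              ⟨(i : ℕ) + 1, by omega⟩
            rw [hmm] at h1
            rw [h1]
          · have hilt := i.isLt
            have hr' : ¬∃ j, mtf k b τ j = b' := by
              rintro ⟨j, hj⟩
              by_cases hj0 : (j : ℕ) = 0
              · rw [mtf_zero _ hj0] at hj
                exact hbb (hj.symm ▸ rfl)
              · have hjle : (j : ℕ) ≤ pos k b τ := by rw [hposm]; omega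
                rw [mtf_le _ hj0 hjle, ← hi] at hj
                have := congrArg Fin.val (hτ hj)
                simp at this
                omega
            rw [stateOf_not_mem hr', if_pos (by rw [← hi]; exact hmem i)]
            omega
        · have hr' : ¬∃ i, mtf k b τ i = b' := by
            rintro ⟨i, hi⟩
            rcases mtf_cases (b := b) i with h | ⟨j, h⟩
            · exact hbb (hi.symm.trans h)
            · exact hr ⟨j, h.symm.trans hi⟩
          rw [stateOf_not_mem hr, stateOf_not_mem hr']
          by_cases hB : b' ∈ B
          · simp only [if_pos hB]
            rw [if_neg (by omega)]
          · simp only [if_neg hB]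
            have := out_age hfill hB
            rw [if_neg (by omega)]


lemma init (hfill : FilledWith A c B) (hk : k = min A B.card) :
    ∃ σ₀ : Fin k → ℕ, Function.Injective σ₀ ∧ (∀ i, σ₀ i ∈ B) ∧ c = stateOf A B c k σ₀ := by
  have hex : ∀ i : Fin k, ∃ b, b ∈ B ∧ c b = (i : ℕ) := by
    intro i
    have hi := i.isLt
    have hmem : (i : ℕ) ∈ Set.Iio (min (A + 1) B.card) := by
      simp only [Set.mem_Iio]; omega
    rw [← hfill.2.2] at hmem
    obtain ⟨b, hb, he⟩ := hmem
    exact ⟨b, hb, he⟩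
  choose σ₀ hσB hσc using hex
  have hinj : Function.Injective σ₀ := by
    intro i j h
    apply Fin.ext
    rw [← hσc i, ← hσc j, h]
  refine ⟨σ₀, hinj, hσB, ?_⟩
  funext b
  by_cases hr : ∃ i, σ₀ i = b
  · obtain ⟨i, hi⟩ := hr
    rw [← hi, stateOf_mem hinj, hσc i]
  · rw [stateOf_not_mem hr]
    by_cases hB : b ∈ B
    · rw [if_pos hB]
      have h1 : c b ∈ Set.Iio (min (A + 1) B.card) := by
        rw [← hfill.2.2]; exact ⟨b, hB, rfl⟩
      simp only [Set.mem_Iio] at h1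
      have h3 : c b ≤ A := hfill.1.1 b
      have h2 : ¬ c b < k := by
        intro hlt
        have h4 := hσc ⟨c b, hlt⟩
        have h5 : σ₀ ⟨c b, hlt⟩ = b := hfill.1.2 _ b (by rw [h4]; omega) h4
        exact hr ⟨_, h5⟩
      omega
    · rw [if_neg hB]

def traceOf (f : ℕ → ℕ) : ℕ → List ℕ
  | 0 => []
  | j + 1 => f j :: traceOf f j

lemma traceOf_mem {f : ℕ → ℕ} {j : ℕ} (hf : ∀ i, i < j → f i ∈ B) :
    ∀ b ∈ traceOf f j, b ∈ B := by
  induction j with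
  | zero => intro b hb; simp [traceOf] at hb
  | succ j IH =>
    intro b hb
    rcases List.mem_cons.mp hb with hb | hb
    · exact hb ▸ hf j (by omega)
    · exact IH (fun i hi => hf i (by omega)) b hb

lemma trace_reaches (hfill : FilledWith A c B) (hk : k = min A B.card)
    (σ : Fin k → ℕ) (hσ : Function.Injective σ) (hσB : ∀ i, σ i ∈ B) :
    ∀ j, j ≤ k → ∀ τ : Fin k → ℕ, Function.Injective τ → (∀ i, τ i ∈ B) →
      (∀ i : ℕ, (h : i < k - j) → τ ⟨i, by omega⟩ = σ ⟨i + j, by omega⟩) →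
      updTrace (updLRU A) (traceOf (fun n => if h : n < k then σ ⟨n, h⟩ else 0) j)
        (stateOf A B c k τ) = stateOf A B c k σ := by
  intro j
  induction j with
  | zero =>
    intro _ τ hτ hτB hagree
    have hts : τ = σ := by
      funext i
      have h := hagree i.val (by omega)
      simpa using h
    rw [hts]
    rfl
  | succ j IH =>
    intro hj1 τ hτ hτB hagree
    have hjk : j < k := by omega
    show updTrace (updLRU A) (traceOf _ j)
      (updLRU A (if h : j < k then σ ⟨j, h⟩ else 0) (stateOf A B c k τ)) = _
    rw [dif_pos hjk]
    rw [upd_eq hfill hk (hσB ⟨j, hjk⟩) hτ hτB]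
    apply IH (by omega) _ (mtf_inj hτ) (mtf_mem (hσB _) hτB)
    intro i hi
    by_cases hi0 : i = 0
    · subst hi0
      rw [mtf_zero _ rfl]
      exact congrArg σ (Fin.ext (by simp))
    · have hple : k - (j + 1) ≤ pos k (σ ⟨j, hjk⟩) τ := by
        by_cases hh : ∃ p, τ p = σ ⟨j, hjk⟩
        · obtain ⟨p, hp⟩ := hh
          rw [pos_hit hτ hp]
          by_contra hlt
          push_neg at hlt
          have hag := hagree p (by omega)
          have hpe : (⟨(p : ℕ), by omega⟩ : Fin k) = p := Fin.ext rfl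
          rw [hpe, hp] at hag
          have := congrArg Fin.val (hσ hag)
          simp at this
          omega
        · rw [pos_miss hh]; omega
      have hik : i < k := by omega
      rw [mtf_le ⟨i, hik⟩ (by simpa using hi0) (by show i ≤ _; omega)]
      have hag := hagree (i - 1) (by omega)
      refine (Eq.trans ?_ hag).trans (congrArg σ (Fin.ext (by simp; omega)))
      exact congrArg τ (Fin.ext rfl)

lemma step_all (hfill : FilledWith A c B) (hk : k = min A B.card) :
    ∀ t : List ℕ, (∀ b ∈ t, b ∈ B) → ∀ σ : Fin k → ℕ, Function.Injective σ →
      (∀ i, σ i ∈ B) → ∃ σ' : Fin k → ℕ, Function.Injective σ' ∧ (∀ i, σ' i ∈ B) ∧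
        updTrace (updLRU A) t (stateOf A B c k σ) = stateOf A B c k σ' := by
  intro t
  induction t with
  | nil => exact fun _ σ h1 h2 => ⟨σ, h1, h2, rfl⟩
  | cons b t IH =>
    intro htB σ h1 h2
    have hbB : b ∈ B := htB b (by simp)
    obtain ⟨σ', hi', hm', he'⟩ := IH (fun x hx => htB x (List.mem_cons_of_mem _ hx))
      (mtf k b σ) (mtf_inj h1) (mtf_mem hbB h2)
    refine ⟨σ', hi', hm', ?_⟩
    show updTrace (updLRU A) t (updLRU A b (stateOf A B c k σ)) = _
    rw [upd_eq hfill hk hbB h1 h2]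
    exact he'

lemma reach_eq (hfill : FilledWith A c B) (hk : k = min A B.card) :
    Reach (updLRU A) ↑B c
      = stateOf A B c k '' {σ | Function.Injective σ ∧ ∀ i, σ i ∈ B} := by
  obtain ⟨σ₀, h1, h2, h3⟩ := init hfill hk
  ext d
  constructor
  · rintro ⟨t, htB, rfl⟩
    obtain ⟨σ', hi', hm', he'⟩ := step_all hfill hk t htB σ₀ h1 h2
    exact ⟨σ', ⟨hi', hm'⟩, ((congrArg (updTrace (updLRU A) t) h3).trans he').symm⟩
  · rintro ⟨σ, ⟨hinj, hmem⟩, rfl⟩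
    refine ⟨traceOf (fun n => if h : n < k then σ ⟨n, h⟩ else 0) k, ?_, ?_⟩
    · apply traceOf_mem
      intro i hi
      rw [dif_pos hi]
      exact hmem _
    · exact (congrArg (updTrace (updLRU A) _) h3).trans
        (trace_reaches hfill hk σ hinj hmem k le_rfl σ₀ h1 h2 (fun i hi => by omega))

lemma stateOf_injOn (hk : k = min A B.card) :
    Set.InjOn (stateOf A B c k) {σ | Function.Injective σ ∧ ∀ i, σ i ∈ B} := by
  intro σ hσ σ' hσ' h
  funext i
  have h1 : stateOf A B c k σ' (σ i) = i := by rw [← h]; exact stateOf_mem hσ.1 i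
  by_cases hex : ∃ j, σ' j = σ i
  · obtain ⟨j, hj⟩ := hex
    have h2 : stateOf A B c k σ' (σ i) = j := hj ▸ stateOf_mem hσ'.1 j
    have hji : j = i := Fin.ext (by rw [← h1, h2])
    exact (hji ▸ hj).symm
  · rw [stateOf_not_mem hex, if_pos (hσ.2 i)] at h1
    have := i.isLt
    omega

lemma card_T (A : ℕ) (B : Finset ℕ) (k : ℕ) :
    Nat.card {σ : Fin k → ℕ | Function.Injective σ ∧ ∀ i, σ i ∈ B}
      = B.card.descFactorial k := by
  have e : {σ : Fin k → ℕ | Function.Injective σ ∧ ∀ i, σ i ∈ B}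
      ≃ (Fin k ↪ {x // x ∈ B}) :=
    { toFun := fun σ => ⟨fun i => ⟨σ.1 i, σ.2.2 i⟩,
        fun i j hij => σ.2.1 (congrArg Subtype.val hij)⟩
      invFun := fun g => ⟨fun i => (g i : ℕ),
        ⟨fun i j hij => g.injective (Subtype.ext hij), fun i => (g i).2⟩⟩
      left_inv := fun σ => rfl
      right_inv := fun g => rfl }
  rw [Nat.card_congr e, Nat.card_eq_fintype_card, Fintype.card_embedding_eq,
    Fintype.card_coe, Fintype.card_fin]

lemma main (hfill : FilledWith A c B) :
    (Reach (updLRU A) ↑B c).ncard = B.card.descFactorial (min A B.card) := by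
  rw [reach_eq hfill rfl, Set.ncard_image_of_injOn (stateOf_injOn rfl)]
  rw [← Nat.card_coe_set_eq]
  exact card_T A B (min A B.card)

end AbsLRU

/-- For an LRU cache of associativity `A` starting from a state filled with a set
`B` of `fp` victim blocks, the number of reachable cache states under traces over
`B` equals `fp!` if `fp < A` and `fp!/(fp−A)!` if `fp ≥ A`. -/
theorem abs_filled_lru (A fp : ℕ) (B : Finset ℕ) (c : ℕ → ℕ)
    (hfp : B.card = fp) (hfill : FilledWith A c B) :
    (fp < A → (Reach (updLRU A) ↑B c).ncard = Nat.factorial fp) ∧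
    (A ≤ fp → (Reach (updLRU A) ↑B c).ncard = Nat.factorial fp / Nat.factorial (fp - A)) := by
  subst hfp
  have h := AbsLRU.main hfill
  constructor
  · intro hlt
    rw [h, min_eq_right (by omega), Nat.descFactorial_self]
  · intro hle
    rw [h, min_eq_left hle, Nat.descFactorial_eq_div hle]
end

section
/- For a FIFO cache of associativity A starting from a state filled with a set B of fp blocks, the number of reachable cache states under traces over B is 1 if fp ≤ A, is A+1 if fp = A+1, and is fp!/(fp−A)! if fp > A+1. -/
/-!
Encode a full FIFO state by the list `l` of its cached blocks, newest first: the age of `b` is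
`l.idxOf b`, which is `A = l.length` for uncached blocks, and a miss on `x` replaces `l` by
`(x :: l).take A`. If `|B| ≤ A` every access hits. If `|B| = A + 1` the only possible miss is on
the unique block of `B` outside the cache, so the reachable lists are the `A + 1` windows
`(w.rotate r).take A` of a single cyclic word `w`. If `|B| ≥ A + 2`, every list of `A` distinct
blocks of `B` is reachable: misses can be undone (going once around a cycle of `A + 1` blocks),
two spare blocks allow exchanging the oldest block and rotating the list, so induction on `A`
can first bring the target's oldest block `x` into the oldest position and then connect the
other `A - 1` positions inside `B \ {x}`. There are `|B|! / (|B| - A)!` such lists.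
-/

open List Relation

namespace FifoCache

theorem idxOf_take {α : Type*} [BEq α] [LawfulBEq α] (b : α) :
    ∀ (l : List α) (n : ℕ), (l.take n).idxOf b = min (l.idxOf b) n
  | [], n => by simp
  | _ :: _, 0 => by simp
  | a :: l, n + 1 => by
    by_cases h : a = b
    · simp [h]
    · simp [idxOf_cons_ne _ h, idxOf_take b l n]

theorem exists_mem_notMem_of_length_lt {α : Type*} [DecidableEq α] {B : Finset α} {l : List α}
    (h : l.length < B.card) : ∃ s ∈ B, s ∉ l := by
  obtain ⟨s, hs, hsl⟩ :=
    Finset.exists_mem_notMem_of_card_lt_card ((toFinset_card_le l).trans_lt h)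
  exact ⟨s, hs, fun h' => hsl (mem_toFinset.2 h')⟩

theorem reach_eq_singleton {upd : ℕ → (ℕ → ℕ) → ℕ → ℕ} {S : Set ℕ} {c : ℕ → ℕ}
    (h : ∀ b ∈ S, upd b c = c) : Reach upd S c = {c} := by
  refine Set.eq_singleton_iff_unique_mem.2 ⟨⟨[], by simp, rfl⟩, ?_⟩
  rintro _ ⟨t, ht, rfl⟩
  induction t with
  | nil => rfl
  | cons b t ih =>
    rw [updTrace, h b (ht b mem_cons_self)]
    exact ih fun b hb => ht b (mem_cons_of_mem _ hb)

def push (A x : ℕ) (l : List ℕ) : List ℕ := if x ∈ l then l else (x :: l).take A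

abbrev Moves (A : ℕ) (B : Finset ℕ) : List ℕ → List ℕ → Prop :=
  ReflTransGen fun l m => ∃ x ∈ B, m = push A x l

structure IsState (A : ℕ) (B : Finset ℕ) (l : List ℕ) : Prop where
  length_eq : l.length = A
  nodup : l.Nodup
  mem : ∀ y ∈ l, y ∈ B

variable {A : ℕ} {B : Finset ℕ} {l m w : List ℕ} {x : ℕ}

theorem push_of_mem (hx : x ∈ l) : push A x l = l := if_pos hx

theorem push_of_notMem (hx : x ∉ l) : push A x l = (x :: l).take A := if_neg hx

theorem length_push (hl : l.length = A) (x : ℕ) : (push A x l).length = A := by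
  unfold push
  split_ifs <;> simp [hl]

theorem updFIFO_idxOf (hl : l.length = A) (x : ℕ) :
    updFIFO A x (fun b => l.idxOf b) = fun b => (push A x l).idxOf b := by
  unfold updFIFO push
  by_cases hx : x ∈ l
  · simp [hx, ← hl, idxOf_lt_length_iff]
  · rw [if_neg (by simp [idxOf_of_notMem hx, hl]), if_neg hx]
    funext b
    have hb : l.idxOf b ≤ A := hl ▸ idxOf_le_length
    by_cases hbx : b = x
    · simp [hbx, idxOf_take]
    · simp only [hbx, if_false, idxOf_take, idxOf_cons_ne _ (Ne.symm hbx)]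
      split_ifs <;> omega

theorem reach_idxOf (hl : l.length = A) :
    Reach (updFIFO A) ↑B (fun b => l.idxOf b) =
      (fun m b => m.idxOf b) '' {m | Moves A B l m} := by
  ext c
  constructor
  · rintro ⟨t, ht, rfl⟩
    induction t generalizing l with
    | nil => exact ⟨l, .refl, rfl⟩
    | cons x t ih =>
      obtain ⟨m, hm, hmc⟩ := ih (length_push hl x) fun b hb => ht b (mem_cons_of_mem _ hb)
      refine ⟨m, .head ⟨x, ht x mem_cons_self, rfl⟩ hm, ?_⟩
      rw [hmc, updTrace, updFIFO_idxOf hl]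
  · rintro ⟨m, hm, rfl⟩
    induction hm using ReflTransGen.head_induction_on with
    | refl => exact ⟨[], by simp, rfl⟩
    | head hstep _ ih =>
      obtain ⟨x, hx, rfl⟩ := hstep
      obtain ⟨t, ht, htc⟩ := ih (length_push hl x)
      refine ⟨x :: t, by simpa [hx] using ht, ?_⟩
      rw [updTrace, updFIFO_idxOf hl, htc]

theorem IsState.push (hl : IsState A B l) (hx : x ∈ B) : IsState A B (push A x l) := by
  unfold FifoCache.push
  split_ifs with hxl
  · exact hl
  · refine ⟨by simp [hl.length_eq], (hl.nodup.cons hxl).sublist (take_sublist _ _), ?_⟩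
    intro y hy
    rcases mem_cons.1 (take_subset _ _ hy) with rfl | hy
    exacts [hx, hl.mem y hy]

theorem IsState.perm {l' : List ℕ} (hl : IsState A B l) (h : l ~ l') : IsState A B l' :=
  ⟨h.length_eq ▸ hl.length_eq, h.nodup_iff.1 hl.nodup, fun y hy => hl.mem y (h.mem_iff.2 hy)⟩

theorem IsState.mono {B' : Finset ℕ} (hl : IsState A B l) (h : B ⊆ B') : IsState A B' l :=
  ⟨hl.length_eq, hl.nodup, fun y hy => h (hl.mem y hy)⟩

theorem IsState.erase (hl : IsState A B l) (hx : x ∉ l) : IsState A (B.erase x) l :=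
  ⟨hl.length_eq, hl.nodup, fun y hy => Finset.mem_erase.2 ⟨fun h => hx (h ▸ hy), hl.mem y hy⟩⟩

theorem isState_cons_iff : IsState (A + 1) B (x :: l) ↔ IsState A B l ∧ x ∈ B ∧ x ∉ l := by
  constructor
  · intro h
    exact ⟨⟨by simpa using h.length_eq, h.nodup.of_cons, fun y hy => h.mem y (mem_cons_of_mem _ hy)⟩,
      h.mem x mem_cons_self, (nodup_cons.1 h.nodup).1⟩
  · rintro ⟨hl, hx, hxl⟩
    exact ⟨by simp [hl.length_eq], hl.nodup.cons hxl, by simpa [hx] using hl.mem⟩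

theorem isState_append_singleton_iff :
    IsState (A + 1) B (l ++ [x]) ↔ IsState A B l ∧ x ∈ B ∧ x ∉ l :=
  ⟨fun h => isState_cons_iff.1 (h.perm (perm_append_singleton x l)),
    fun h => (isState_cons_iff.2 h).perm (perm_append_singleton x l).symm⟩

theorem Moves.isState (h : Moves A B l m) (hl : IsState A B l) : IsState A B m := by
  induction h with
  | refl => exact hl
  | tail _ hstep ih =>
    obtain ⟨x, hx, rfl⟩ := hstep
    exact ih.push hx

theorem Moves.take_cons (hx : x ∈ B) (hxl : x ∉ l) : Moves A B l ((x :: l).take A) :=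
  .single ⟨x, hx, (push_of_notMem hxl).symm⟩

theorem exists_rotate_eq_append (hlen : w.length = A + 1) (r : ℕ) :
    ∃ v e, v.length = A ∧ w.rotate r = v ++ [e] ∧ w.rotate (r + A) = e :: v := by
  obtain ⟨v, e, hve⟩ : ∃ v e, w.rotate r = v ++ [e] :=
    ⟨_, _, (dropLast_append_getLast (ne_nil_of_length_pos (by simp [hlen]))).symm⟩
  have hv : v.length = A := by simpa [hlen] using (congrArg length hve).symm
  refine ⟨v, e, hv, hve, ?_⟩
  rw [← rotate_rotate, hve, ← hv, rotate_append_length_eq, singleton_append]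

theorem Moves.take_rotate_add (hw : w.Nodup) (hlen : w.length = A + 1) (hB : ∀ y ∈ w, y ∈ B)
    (r : ℕ) : Moves A B ((w.rotate r).take A) ((w.rotate (r + A)).take A) := by
  obtain ⟨v, e, hv, hve, hrot⟩ := exists_rotate_eq_append hlen r
  have he : e ∉ v := (nodup_cons.1 (hrot ▸ nodup_rotate.2 hw)).1
  rw [hve, hrot, take_left' hv]
  exact Moves.take_cons (hB e (mem_rotate.1 (hve ▸ mem_append_right _ (mem_singleton_self e)))) he

theorem Moves.take_rotate (hw : w.Nodup) (hlen : w.length = A + 1) (hB : ∀ y ∈ w, y ∈ B)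
    (r : ℕ) : Moves A B (w.take A) ((w.rotate r).take A) := by
  have hmul : ∀ k, Moves A B (w.take A) ((w.rotate (k * A)).take A) := by
    intro k
    induction k with
    | zero => simpa using .refl
    | succ k ih => exact ih.trans (by simpa [add_mul] using take_rotate_add hw hlen hB (k * A))
  rcases A with _ | a
  · simpa using ReflTransGen.refl
  · -- `a + 1 ≡ -1` modulo the length `a + 2` of `w`
    have : w.rotate ((a + 1) * r * (a + 1)) = w.rotate r := by
      rw [show (a + 1) * r * (a + 1) = w.length * (a * r) + r by rw [hlen]; ring,
        ← rotate_rotate, rotate_length_mul]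
    simpa [this] using hmul ((a + 1) * r)

theorem Moves.symm (h : Moves A B l m) (hl : IsState A B l) : Moves A B m l := by
  induction h with
  | refl => exact .refl
  | @tail m _ hlm hstep ih =>
    obtain ⟨x, hx, rfl⟩ := hstep
    have hm := Moves.isState hlm hl
    refine .trans ?_ ih
    by_cases hxm : x ∈ m
    · rw [push_of_mem hxm]
    · rw [push_of_notMem hxm]
      simpa [take_left' hm.length_eq] using
        take_rotate (A := A) (B := B) (hm.nodup.cons hxm) (by simp [hm.length_eq])
          (by simpa [hx] using hm.mem) 1

theorem setOf_moves_take_eq_range (hw : w.Nodup) (hlen : w.length = A + 1)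
    (hB : ∀ y, y ∈ B ↔ y ∈ w) :
    {m | Moves A B (w.take A) m} = Set.range fun r : Fin (A + 1) => (w.rotate r).take A := by
  refine Set.Subset.antisymm (fun m hm => ?_) ?_
  · induction hm with
    | refl => exact ⟨0, by simp⟩
    | tail _ hstep ih =>
      obtain ⟨r, rfl⟩ := ih
      obtain ⟨x, hx, rfl⟩ := hstep
      obtain ⟨v, e, hv, hve, hrot⟩ := exists_rotate_eq_append hlen r
      show push A x ((w.rotate r).take A) ∈ _
      rw [hve, take_left' hv]
      by_cases hxv : x ∈ v
      · exact ⟨r, by simp only [hve, take_left' hv, push_of_mem hxv]⟩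
      · have hxe : x = e := by
          have : x ∈ v ++ [e] := hve ▸ mem_rotate.2 ((hB x).1 hx)
          simpa [hxv] using this
        refine ⟨⟨(r + A) % (A + 1), Nat.mod_lt _ (Nat.succ_pos A)⟩, ?_⟩
        show (w.rotate ((r + A) % (A + 1))).take A = _
        rw [show (r + A : ℕ) % (A + 1) = (r + A) % w.length by rw [hlen], rotate_mod,
          push_of_notMem hxv, hxe, ← hrot]
  · rintro _ ⟨r, rfl⟩
    exact Moves.take_rotate hw hlen (fun y => (hB y).2) r

theorem ncard_range_take_rotate (hw : w.Nodup) (hlen : w.length = A + 1) :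
    (Set.range fun r : Fin (A + 1) => (w.rotate r).take A).ncard = A + 1 := by
  rw [Set.ncard_range_of_injective, Nat.card_eq_fintype_card, Fintype.card_fin]
  intro r r' h
  rcases A with _ | a
  · exact Fin.ext (by omega)
  · have hr : (r : ℕ) < w.length := by rw [hlen]; exact r.isLt
    have hr' : (r' : ℕ) < w.length := by rw [hlen]; exact r'.isLt
    have := congrArg head? h
    simp only [head?_take, head?_rotate hr, head?_rotate hr'] at this
    exact Fin.ext ((getElem?_inj hr hw).1 (by simpa using this))

theorem ncard_setOf_moves_of_card_eq_succ (hl : IsState A B l) (hB : B.card = A + 1) :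
    {m | Moves A B l m}.ncard = A + 1 := by
  obtain ⟨x, hx, hxl⟩ := exists_mem_notMem_of_length_lt (B := B) (l := l)
    (by rw [hl.length_eq]; omega)
  have hw : IsState (A + 1) B (l ++ [x]) := isState_append_singleton_iff.2 ⟨hl, hx, hxl⟩
  have hBw : ∀ y, y ∈ B ↔ y ∈ l ++ [x] := by
    have : (l ++ [x]).toFinset = B :=
      Finset.eq_of_subset_of_card_le (fun y hy => hw.mem y (mem_toFinset.1 hy))
        (by rw [toFinset_card_of_nodup hw.nodup, hw.length_eq, hB])
    simp [← this, or_comm]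
  rw [← take_left' (l₂ := [x]) hl.length_eq, setOf_moves_take_eq_range hw.nodup hw.length_eq hBw,
    ncard_range_take_rotate hw.nodup hw.length_eq]

theorem Moves.append_singleton_cons {z s : ℕ} (hl : l.length = A) (hs : s ∈ B)
    (hsl : s ∉ l ++ [z]) : Moves (A + 1) B (l ++ [z]) (s :: l) := by
  simpa [take_left' hl] using Moves.take_cons (A := A + 1) hs hsl

/-- Both states reach `s :: l` by a miss on a block `s` outside `z :: z' :: l`. -/
theorem Moves.append_singleton {z z' : ℕ} (hz : IsState (A + 1) B (l ++ [z]))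
    (hz' : IsState (A + 1) B (l ++ [z'])) (hB : A + 3 ≤ B.card) :
    Moves (A + 1) B (l ++ [z]) (l ++ [z']) := by
  have hl := (isState_append_singleton_iff.1 hz).1
  obtain ⟨s, hs, hsl⟩ := exists_mem_notMem_of_length_lt (B := B) (l := z :: z' :: l)
    (by simp [hl.length_eq]; omega)
  simp only [mem_cons, not_or] at hsl
  exact (Moves.append_singleton_cons hl.length_eq hs (by simp [hsl])).trans
    ((Moves.append_singleton_cons hl.length_eq hs (by simp [hsl])).symm hz')

theorem Moves.rotate_one (hl : IsState (A + 1) B l) (hB : A + 3 ≤ B.card) :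
    Moves (A + 1) B l (l.rotate 1) := by
  obtain ⟨m, l', rfl⟩ := exists_cons_of_length_eq_add_one hl.length_eq
  obtain ⟨hl', hm, hml'⟩ := isState_cons_iff.1 hl
  obtain ⟨y, hy, hyl⟩ := exists_mem_notMem_of_length_lt (B := B) (l := m :: l')
    (by simp [hl'.length_eq]; omega)
  simp only [mem_cons, not_or] at hyl
  have hy' : IsState (A + 1) B (l' ++ [y]) := isState_append_singleton_iff.2 ⟨hl', hy, hyl.2⟩
  have hback : Moves (A + 1) B (l' ++ [y]) (m :: l') :=
    Moves.append_singleton_cons hl'.length_eq hm (by simp [hml', Ne.symm hyl.1])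
  simpa using (hback.symm hy').trans
    (Moves.append_singleton hy' (isState_append_singleton_iff.2 ⟨hl', hm, hml'⟩) hB)

theorem Moves.rotate (hl : IsState (A + 1) B l) (hB : A + 3 ≤ B.card) (k : ℕ) :
    Moves (A + 1) B l (l.rotate k) := by
  induction k with
  | zero => simpa using .refl
  | succ k ih =>
    rw [← rotate_rotate]
    exact ih.trans (Moves.rotate_one (hl.perm (rotate_perm l k).symm) hB)

theorem exists_moves_append_singleton (hl : IsState (A + 1) B l) (hx : x ∈ B)
    (hB : A + 3 ≤ B.card) :
    ∃ l', IsState (A + 1) B (l' ++ [x]) ∧ Moves (A + 1) B l (l' ++ [x]) := by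
  by_cases hxl : x ∈ l
  · obtain ⟨p, q, rfl⟩ := append_of_mem hxl
    have hrot : (p ++ x :: q).rotate (p.length + 1) = q ++ p ++ [x] := by
      simpa using rotate_append_length_eq (p ++ [x]) q
    exact ⟨q ++ p, hrot ▸ hl.perm (rotate_perm _ _).symm, hrot ▸ Moves.rotate hl hB _⟩
  · obtain ⟨l', t, rfl⟩ : ∃ l' t, l = l' ++ [t] :=
      ⟨_, _, (dropLast_append_getLast (ne_nil_of_length_pos (by simp [hl.length_eq]))).symm⟩
    have hl' := (isState_append_singleton_iff.1 hl).1
    have hx' : IsState (A + 1) B (l' ++ [x]) :=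
      isState_append_singleton_iff.2 ⟨hl', hx, fun h => hxl (mem_append_left _ h)⟩
    exact ⟨l', hx', Moves.append_singleton hl hx' hB⟩

/-- A miss on `y` is simulated by the same miss followed by restoring `x` as the oldest block. -/
theorem Moves.append_singleton_of_erase (h : Moves A (B.erase x) l m)
    (hl : IsState A (B.erase x) l) (hx : x ∈ B) (hB : A + 3 ≤ B.card) :
    Moves (A + 1) B (l ++ [x]) (m ++ [x]) := by
  induction h with
  | refl => exact .refl
  | @tail m _ hlm hstep ih =>
    obtain ⟨y, hy, rfl⟩ := hstep
    have hm := Moves.isState hlm hl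
    refine ih.trans ?_
    by_cases hym : y ∈ m
    · rw [push_of_mem hym]
    rw [push_of_notMem hym]
    rcases eq_nil_or_concat m with rfl | ⟨m', t, rfl⟩
    · rw [← hm.length_eq]
      exact .refl
    simp only [concat_eq_append] at hm hym ⊢
    have hxm : x ∉ m' ++ [t] := fun h => Finset.notMem_erase x B (hm.mem x h)
    have hyt : IsState (A + 1) B (y :: m' ++ [t]) :=
      isState_cons_iff.2 ⟨hm.mono (Finset.erase_subset x B), Finset.mem_of_mem_erase hy, hym⟩
    have hyx : IsState (A + 1) B (y :: m' ++ [x]) := by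
      refine isState_append_singleton_iff.2 ⟨(isState_append_singleton_iff.1 hyt).1, hx, ?_⟩
      simp only [mem_cons, not_or]
      exact ⟨Ne.symm (Finset.ne_of_mem_erase hy), fun h => hxm (mem_append_left _ h)⟩
    rw [show (y :: (m' ++ [t])).take A = y :: m' by rw [← hm.length_eq]; simp]
    refine .trans ?_ (Moves.append_singleton hyt hyx hB)
    exact Moves.append_singleton_cons hm.length_eq (Finset.mem_of_mem_erase hy) (by simp_all)

theorem Moves.of_isState (hB : A + 2 ≤ B.card) (hl : IsState A B l) (hm : IsState A B m) :
    Moves A B l m := by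
  induction A generalizing B l m with
  | zero => rw [length_eq_zero_iff.1 hl.length_eq, length_eq_zero_iff.1 hm.length_eq]
  | succ A ih =>
    obtain ⟨m', x, rfl⟩ : ∃ m' x, m = m' ++ [x] :=
      ⟨_, _, (dropLast_append_getLast (ne_nil_of_length_pos (by simp [hm.length_eq]))).symm⟩
    obtain ⟨hm', hx, hxm'⟩ := isState_append_singleton_iff.1 hm
    obtain ⟨l', hl', hll'⟩ := exists_moves_append_singleton hl hx hB
    obtain ⟨hl'', -, hxl'⟩ := isState_append_singleton_iff.1 hl'
    have hcard : A + 2 ≤ (B.erase x).card := by rw [Finset.card_erase_of_mem hx]; omega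
    exact hll'.trans (Moves.append_singleton_of_erase
      (ih hcard (hl''.erase hxl') (hm'.erase hxm')) (hl''.erase hxl') hx hB)

theorem setOf_moves_eq_setOf_isState (hB : A + 2 ≤ B.card) (hl : IsState A B l) :
    {m | Moves A B l m} = {m | IsState A B m} :=
  Set.ext fun _ => ⟨fun h => Moves.isState h hl, Moves.of_isState hB hl⟩

theorem ncard_setOf_isState : {l | IsState A B l}.ncard = B.card.descFactorial A := by
  have hrange : {l | IsState A B l} = Set.range fun f : Fin A ↪ B => ofFn fun i => (f i : ℕ) := by
    ext l
    constructor
    · intro hl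
      obtain rfl := hl.length_eq
      refine ⟨⟨fun i => ⟨l[i], hl.mem _ (getElem_mem _)⟩, fun i j hij =>
        Fin.ext (hl.nodup.getElem_inj_iff.1 (congrArg Subtype.val hij))⟩, ?_⟩
      simp
    · rintro ⟨f, rfl⟩
      refine ⟨length_ofFn, nodup_ofFn.2 (Subtype.val_injective.comp f.injective), ?_⟩
      simp [mem_ofFn]
  rw [hrange, Set.ncard_range_of_injective, Nat.card_eq_fintype_card, Fintype.card_embedding_eq,
    Fintype.card_fin, Fintype.card_coe]
  exact fun f g h => DFunLike.ext _ _ fun i => Subtype.ext (congrFun (ofFn_injective h) i)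

theorem injOn_idxOf : Set.InjOn (fun (l : List ℕ) b => l.idxOf b) {l | IsState A B l} := by
  intro l hl m hm h
  refine ext_getElem (hl.length_eq.trans hm.length_eq.symm) fun i hi hi' => ?_
  have hidx : m.idxOf l[i] = i := by
    have hli := congrFun h l[i]
    simp only at hli
    rw [← hli]
    exact hl.nodup.idxOf_getElem i hi
  have := getElem_idxOf (hidx ▸ hi' : m.idxOf l[i] < m.length)
  simp only [hidx] at this
  exact this.symm

theorem CacheInv.eq_idxOf {c : ℕ → ℕ} (hc : CacheInv A c) (hl : l.length = A)
    (hcl : ∀ i (hi : i < l.length), c l[i] = i) : c = fun b => l.idxOf b := by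
  funext b
  by_cases hb : c b < A
  · have hbl : l[c b] = b := hc.2 _ _ (by rw [hcl]; exact hb) (by rw [hcl])
    have := hcl _ (idxOf_lt_length_of_mem (hbl ▸ getElem_mem _ : b ∈ l))
    rwa [getElem_idxOf] at this
  · have hbl : b ∉ l := by
      intro hmem
      obtain ⟨i, hi, rfl⟩ := getElem_of_mem hmem
      exact hb (by rw [hcl i hi]; omega)
    rw [idxOf_of_notMem hbl, hl]
    exact le_antisymm (hc.1 b) (not_lt.1 hb)

theorem FilledWith.exists_isState {c : ℕ → ℕ} (h : FilledWith A c B) (hA : A ≤ B.card) :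
    ∃ l, IsState A B l ∧ c = fun b => l.idxOf b := by
  obtain ⟨hc, hcov, himg⟩ := h
  choose g hg using hcov
  have hgB : ∀ i : Fin A, g i i.isLt ∈ B := by
    intro i
    obtain ⟨b, hb, hbi⟩ : (i : ℕ) ∈ c '' ↑B := by
      rw [himg, Set.mem_Iio, lt_min_iff]
      omega
    rwa [hc.2 (g i i.isLt) b (by rw [hg]; exact i.isLt) (by rw [hg, hbi])]
  refine ⟨ofFn fun i : Fin A => g i i.isLt, ⟨length_ofFn, ?_, ?_⟩,
    CacheInv.eq_idxOf hc length_ofFn ?_⟩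
  · exact nodup_ofFn.2 fun i j hij => Fin.ext (by simpa [hg] using congrArg c hij)
  · simpa [mem_ofFn] using hgB
  · simp [hg]

theorem FilledWith.updFIFO_eq_self {c : ℕ → ℕ} (h : FilledWith A c B) (hB : B.card ≤ A) {b : ℕ}
    (hb : b ∈ B) : updFIFO A b c = c := by
  have : c b ∈ c '' ↑B := ⟨b, hb, rfl⟩
  rw [h.2.2, Set.mem_Iio, lt_min_iff] at this
  exact if_pos (by omega)

end FifoCache

open FifoCache in
/-- For a FIFO cache of associativity `A` starting from a state filled with a set
`B` of `fp` blocks, the number of reachable cache states under traces over `B` is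
`1` if `fp ≤ A`, is `A+1` if `fp = A+1`, and is `fp!/(fp−A)!` if `fp > A+1`. -/
theorem abs_filled_fifo (A fp : ℕ) (B : Finset ℕ) (c : ℕ → ℕ)
    (hfp : B.card = fp) (hfill : FilledWith A c B) :
    (fp ≤ A → (Reach (updFIFO A) ↑B c).ncard = 1) ∧
    (fp = A + 1 → (Reach (updFIFO A) ↑B c).ncard = A + 1) ∧
    (A + 1 < fp → (Reach (updFIFO A) ↑B c).ncard = Nat.factorial fp / Nat.factorial (fp - A)) := by
  subst hfp
  refine ⟨fun hle => ?_, fun heq => ?_, fun hlt => ?_⟩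
  · rw [reach_eq_singleton fun b hb => hfill.updFIFO_eq_self hle hb, Set.ncard_singleton]
  all_goals
    obtain ⟨l, hl, rfl⟩ := hfill.exists_isState (by omega)
    rw [reach_idxOf hl.length_eq]
  · have hsub : {m | Moves A B l m} ⊆ {m | IsState A B m} := fun _ hm => Moves.isState hm hl
    rw [(injOn_idxOf.mono hsub).ncard_image, ncard_setOf_moves_of_card_eq_succ hl heq]
  · rw [setOf_moves_eq_setOf_isState (by omega) hl, injOn_idxOf.ncard_image, ncard_setOf_isState,
      Nat.descFactorial_eq_div (by omega)]
end

section
/- For a PLRU cache of associativity A (a power of two) starting from a state filled with fp blocks, the number of reachable cache states under traces over those blocks equals 2^(fp−1) if 1 ≤ fp ≤ A, and fp!/(fp−A)! if fp > A. -/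
def sOf : ℕ → (ℕ → Bool) → ℕ → ℕ
  | 0, _, l => l
  | k+1, v, l => (if v 1 then 1 - l % 2 else l % 2) + 2 * sOf k (fun m => v (2*m + l % 2)) (l / 2)

def touch : ℕ → ℕ → (ℕ → Bool) → ℕ → Bool
  | 0, _, v => v
  | k+1, l0, v => fun n =>
    if n = 1 then decide (l0 % 2 = 1)
    else if n % 2 = l0 % 2 then touch k (l0 / 2) (fun m => v (2 * m + n % 2)) (n / 2)
    else v n

lemma sOf_succ (k : ℕ) (v : ℕ → Bool) (l : ℕ) :
    sOf (k+1) v l = (if v 1 then 1 - l % 2 else l % 2) + 2 * sOf k (fun m => v (2*m + l % 2)) (l / 2) := rfl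

lemma touch_succ (k l0 : ℕ) (v : ℕ → Bool) (n : ℕ) :
    touch (k+1) l0 v n = if n = 1 then decide (l0 % 2 = 1)
      else if n % 2 = l0 % 2 then touch k (l0 / 2) (fun m => v (2 * m + n % 2)) (n / 2)
      else v n := rfl

lemma piPLRU_self (a : ℕ) : piPLRU a a = 0 := by rw [piPLRU]; simp

lemma piPLRU_01 {a a' : ℕ} (h : ¬ a' = a) (h2 : a % 2 = 0) (h3 : a' % 2 = 1) :
    piPLRU a a' = a' := by rw [piPLRU]; rw [dif_neg h, dif_pos ⟨h2, h3⟩]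

lemma piPLRU_10 {a a' : ℕ} (h : ¬ a' = a) (h2 : a % 2 = 1) (h3 : a' % 2 = 0) :
    piPLRU a a' = a' + 1 := by
  rw [piPLRU]; rw [dif_neg h, dif_neg (by omega), dif_pos ⟨h2, h3⟩]

lemma piPLRU_rec {a a' : ℕ} (h : ¬ a' = a) (h2 : a % 2 = a' % 2) :
    piPLRU a a' = 2 * piPLRU (a / 2) (a' / 2) := by
  rw [piPLRU]; rw [dif_neg h, dif_neg (by omega), dif_neg (by omega)]

lemma sOf_lt {k : ℕ} {v : ℕ → Bool} {l : ℕ} (hl : l < 2^k) : sOf k v l < 2^k := by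
  induction k generalizing v l with
  | zero => simpa [sOf] using hl
  | succ k ih =>
      rw [sOf_succ]
      have h1 : sOf k (fun m => v (2*m + l % 2)) (l / 2) < 2^k := ih (by omega)
      have : (if v 1 then 1 - l % 2 else l % 2) ≤ 1 := by split <;> omega
      rw [pow_succ]; omega

lemma sOf_congr {k : ℕ} {v w : ℕ → Bool} (h : ∀ n, 1 ≤ n → v n = w n) (l : ℕ) :
    sOf k v l = sOf k w l := by
  induction k generalizing v w l with
  | zero => rfl
  | succ k ih =>
      have hrec := ih (v := fun m => v (2*m + l % 2)) (w := fun m => w (2*m + l % 2))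
        (fun n _ => h (2*n + l % 2) (by omega)) (l / 2)
      rw [sOf_succ, sOf_succ, h 1 (by omega), hrec]

lemma sOf_false {k : ℕ} {l : ℕ} (hl : l < 2^k) : sOf k (fun _ => false) l = l := by
  induction k generalizing l with
  | zero => rfl
  | succ k ih =>
      rw [sOf_succ]
      simp only [Bool.false_eq_true, if_false]
      rw [ih (l := l / 2) (by omega)]
      omega

lemma sOf_inj {k : ℕ} {v : ℕ → Bool} {l l' : ℕ} (hl : l < 2^k) (hl' : l' < 2^k)
    (h : sOf k v l = sOf k v l') : l = l' := by
  induction k generalizing v l l' with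
  | zero => omega
  | succ k ih =>
      rw [sOf_succ, sOf_succ] at h
      have hp : l % 2 = l' % 2 := by
        cases hv : v 1 <;> simp only [hv, Bool.false_eq_true, if_true, if_false] at h <;> omega
      rw [hp] at h
      have ha : sOf k (fun m => v (2*m + l' % 2)) (l / 2)
          = sOf k (fun m => v (2*m + l' % 2)) (l' / 2) := by omega
      have := ih (v := fun m => v (2*m + l' % 2)) (l := l/2) (l' := l'/2) (by omega) (by omega) ha
      omega

lemma sOf_touch_self {k : ℕ} (v : ℕ → Bool) {l : ℕ} (hl : l < 2^k) :
    sOf k (touch k l v) l = 0 := by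
  induction k generalizing v l with
  | zero => exact (by omega : l = 0)
  | succ k ih =>
      rw [sOf_succ]
      have h1 : touch (k+1) l v 1 = decide (l % 2 = 1) := by rw [touch_succ]; simp
      have h2 : sOf k (fun m => touch (k+1) l v (2*m + l % 2)) (l / 2)
          = sOf k (touch k (l / 2) (fun m => v (2 * m + l % 2))) (l / 2) := by
        apply sOf_congr
        intro n hn
        rw [touch_succ, if_neg (by omega), if_pos (by omega)]
        have e1 : (2*n + l % 2) % 2 = l % 2 := by omega
        have e2 : (2*n + l % 2) / 2 = n := by omega
        simp only [e1, e2]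
      rw [h1, h2, ih _ (by omega)]
      rcases Nat.mod_two_eq_zero_or_one l with h | h <;> rw [h] <;> simp

theorem piPLRU_sOf {k : ℕ} (v : ℕ → Bool) {l0 l : ℕ} (h0 : l0 < 2^k) (hl : l < 2^k) :
    piPLRU (sOf k v l0) (sOf k v l) = sOf k (touch k l0 v) l := by
  induction k generalizing v l0 l with
  | zero =>
      have h1 : l0 = 0 := by omega
      have h2 : l = 0 := by omega
      subst h1; subst h2
      simpa [sOf, touch] using piPLRU_self 0
  | succ k ih =>
      by_cases hll : l = l0
      · subst hll
        rw [piPLRU_self, sOf_touch_self v hl]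
      · have hne : ¬ sOf (k+1) v l = sOf (k+1) v l0 := fun h => hll (sOf_inj hl h0 h)
        have htop : touch (k+1) l0 v 1 = decide (l0 % 2 = 1) := by rw [touch_succ]; simp
        have hA : sOf (k+1) v l0 = (if v 1 then 1 - l0 % 2 else l0 % 2)
            + 2 * sOf k (fun m => v (2*m + l0 % 2)) (l0 / 2) := rfl
        have hB : sOf (k+1) v l = (if v 1 then 1 - l % 2 else l % 2)
            + 2 * sOf k (fun m => v (2*m + l % 2)) (l / 2) := rfl
        have hC : sOf (k+1) (touch (k+1) l0 v) l
            = (if decide (l0 % 2 = 1) = true then 1 - l % 2 else l % 2)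
            + 2 * sOf k (fun m => touch (k+1) l0 v (2*m + l % 2)) (l / 2) := by
          rw [sOf_succ, htop]
        by_cases hp : l % 2 = l0 % 2
        · -- same side
          have hfun : (fun m => v (2*m + l % 2)) = (fun m => v (2*m + l0 % 2)) := by rw [hp]
          have hsub : sOf k (fun m => touch (k+1) l0 v (2*m + l % 2)) (l / 2)
              = sOf k (touch k (l0/2) (fun m => v (2*m + l0 % 2))) (l / 2) := by
            apply sOf_congr
            intro n hn
            rw [touch_succ, if_neg (by omega), if_pos (by omega)]
            have e1 : (2*n + l % 2) % 2 = l0 % 2 := by omega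
            have e2 : (2*n + l % 2) / 2 = n := by omega
            simp only [e1, e2]
          have key := ih (fun m => v (2*m + l0 % 2)) (l0 := l0/2) (l := l/2) (by omega) (by omega)
          have hbit : (if v 1 then 1 - l % 2 else l % 2) = (if v 1 then 1 - l0 % 2 else l0 % 2) := by
            rw [hp]
          rw [hA, hB, hC, hfun, hbit, hsub]
          have hab : ¬ ((if v 1 then 1 - l0 % 2 else l0 % 2) + 2 * sOf k (fun m => v (2*m + l0 % 2)) (l / 2)
              = (if v 1 then 1 - l0 % 2 else l0 % 2) + 2 * sOf k (fun m => v (2*m + l0 % 2)) (l0 / 2)) := by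
            rw [hA, hB, hfun, hbit] at hne; exact hne
          rw [piPLRU_rec hab (by omega)]
          have e1 : ((if v 1 then 1 - l0 % 2 else l0 % 2) + 2 * sOf k (fun m => v (2*m + l0 % 2)) (l0 / 2)) / 2
              = sOf k (fun m => v (2*m + l0 % 2)) (l0 / 2) := by
            have : (if v 1 then 1 - l0 % 2 else l0 % 2) ≤ 1 := by split <;> omega
            omega
          have e2 : ((if v 1 then 1 - l0 % 2 else l0 % 2) + 2 * sOf k (fun m => v (2*m + l0 % 2)) (l / 2)) / 2
              = sOf k (fun m => v (2*m + l0 % 2)) (l / 2) := by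
            have : (if v 1 then 1 - l0 % 2 else l0 % 2) ≤ 1 := by split <;> omega
            omega
          rw [e1, e2, key]
          have hz : (if decide (l0 % 2 = 1) = true then 1 - l % 2 else l % 2) = 0 := by
            rcases Nat.mod_two_eq_zero_or_one l0 with h | h <;> simp [h] <;> omega
          rw [hz]
          omega
        · -- different sides
          have hsub : sOf k (fun m => touch (k+1) l0 v (2*m + l % 2)) (l / 2)
              = sOf k (fun m => v (2*m + l % 2)) (l / 2) := by
            apply sOf_congr
            intro n hn
            rw [touch_succ, if_neg (by omega), if_neg (by omega)]
          rw [hA, hB, hC, hsub]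
          have hlp : l % 2 = 1 - l0 % 2 := by omega
          rcases Nat.mod_two_eq_zero_or_one l0 with h0p | h0p <;> cases hv : v 1 <;>
            simp only [h0p, hlp, hv, Bool.false_eq_true, if_true, if_false] <;> norm_num
          all_goals first
          | exact piPLRU_01 (by omega) (by omega) (by omega)
          | exact piPLRU_10 (by omega) (by omega) (by omega)
          | (rw [piPLRU_10 (by omega) (by omega) (by omega)]; omega)

lemma touch_point {k l0 : ℕ} {v w : ℕ → Bool} {n : ℕ} (h : v n = w n) :
    touch k l0 v n = touch k l0 w n := by
  induction k generalizing l0 v w n with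
  | zero => exact h
  | succ k ih =>
      rw [touch_succ, touch_succ]
      split
      · rfl
      · split
        · refine ih ?_
          show v (2 * (n/2) + n % 2) = w (2 * (n/2) + n % 2)
          have e : 2 * (n/2) + n % 2 = n := by omega
          rw [e]; exact h
        · exact h

lemma touch_zero_idx {k l0 : ℕ} (v : ℕ → Bool) : touch k l0 v 0 = v 0 := by
  induction k generalizing l0 v with
  | zero => rfl
  | succ k ih =>
      rw [touch_succ, if_neg (by omega)]
      split
      · simpa using ih (fun m => v (2 * m + 0 % 2))
      · rfl

lemma touch_supp {k l0 m : ℕ} {v : ℕ → Bool} (hl0 : l0 < m)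
    (hv : ∀ n, 1 ≤ n → v n = true → n < m) :
    ∀ n, 1 ≤ n → touch k l0 v n = true → n < m := by
  induction k generalizing l0 m v with
  | zero => exact hv
  | succ k ih =>
      intro n h1 ht
      rw [touch_succ] at ht
      by_cases hn1 : n = 1
      · rw [if_pos hn1] at ht
        have : l0 % 2 = 1 := by simpa using ht
        omega
      · rw [if_neg hn1] at ht
        by_cases hp : n % 2 = l0 % 2
        · rw [if_pos hp] at ht
          have hrec := ih (l0 := l0 / 2) (m := (m + 1 - l0 % 2) / 2)
            (v := fun mm => v (2 * mm + n % 2)) (by omega)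
            (fun j hj hvj => by
              have := hv (2 * j + n % 2) (by omega) hvj
              omega)
            (n / 2) (by omega) ht
          omega
        · rw [if_neg hp] at ht
          exact hv n h1 ht

def touchFold (k : ℕ) (L : List ℕ) (v : ℕ → Bool) : ℕ → Bool :=
  L.foldl (fun w l => touch k l w) v

lemma touchFold_nil (k : ℕ) (v : ℕ → Bool) : touchFold k [] v = v := rfl

lemma touchFold_cons (k l : ℕ) (L : List ℕ) (v : ℕ → Bool) :
    touchFold k (l :: L) v = touchFold k L (touch k l v) := rfl

lemma touchFold_append (k : ℕ) (L L' : List ℕ) (v : ℕ → Bool) :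
    touchFold k (L ++ L') v = touchFold k L' (touchFold k L v) := by
  simp [touchFold, List.foldl_append]

lemma touchFold_point {k : ℕ} {L : List ℕ} {v w : ℕ → Bool} {n : ℕ} (h : v n = w n) :
    touchFold k L v n = touchFold k L w n := by
  induction L generalizing v w with
  | nil => exact h
  | cons l L ih => rw [touchFold_cons, touchFold_cons]; exact ih (touch_point h)

lemma touchFold_zero_idx {k : ℕ} (L : List ℕ) (v : ℕ → Bool) :
    touchFold k L v 0 = v 0 := by
  induction L generalizing v with
  | nil => rfl
  | cons l L ih => rw [touchFold_cons, ih, touch_zero_idx]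

lemma touchFold_lift_one {k s : ℕ} (hs : s ≤ 1) (L : List ℕ) (w : ℕ → Bool) (hL : L ≠ []) :
    touchFold (k+1) (L.map (fun l => 2*l + s)) w 1 = decide (s = 1) := by
  induction L generalizing w with
  | nil => exact absurd rfl hL
  | cons l L ih =>
      rw [List.map_cons, touchFold_cons]
      rcases L with _ | ⟨l', L'⟩
      · rw [List.map_nil, touchFold_nil, touch_succ, if_pos rfl]
        have : (2*l + s) % 2 = s := by omega
        rw [this]
      · exact ih _ (by simp)

lemma touchFold_lift_same {k s : ℕ} (hs : s ≤ 1) (L : List ℕ) (w : ℕ → Bool) (n : ℕ)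
    (hn : 2 ≤ n) (hp : n % 2 = s) :
    touchFold (k+1) (L.map (fun l => 2*l + s)) w n = touchFold k L (fun m => w (2*m + s)) (n/2) := by
  induction L generalizing w with
  | nil =>
      rw [List.map_nil, touchFold_nil, touchFold_nil]
      show w n = w (2 * (n/2) + s)
      have e : 2 * (n/2) + s = n := by omega
      rw [e]
  | cons l L ih =>
      rw [List.map_cons, touchFold_cons, touchFold_cons, ih]
      refine touchFold_point ?_
      show touch (k+1) (2*l + s) w (2 * (n/2) + s) = touch k l (fun m => w (2*m + s)) (n/2)
      rw [touch_succ, if_neg (by omega), if_pos (by omega)]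
      have e1 : (2 * (n/2) + s) % 2 = s := by omega
      have e2 : (2 * (n/2) + s) / 2 = n / 2 := by omega
      have e3 : (2*l + s) / 2 = l := by omega
      simp only [e1, e2, e3]

lemma touchFold_lift_other {k s : ℕ} (hs : s ≤ 1) (L : List ℕ) (w : ℕ → Bool) (n : ℕ)
    (hn : 2 ≤ n) (hp : ¬ n % 2 = s) :
    touchFold (k+1) (L.map (fun l => 2*l + s)) w n = w n := by
  induction L generalizing w with
  | nil => rfl
  | cons l L ih =>
      rw [List.map_cons, touchFold_cons, ih]
      rw [touch_succ, if_neg (by omega), if_neg (by omega)]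

lemma touch_zero_false {k : ℕ} : touch k 0 (fun _ => false) = (fun _ => false) := by
  induction k with
  | zero => rfl
  | succ k ih =>
      funext n
      rw [touch_succ]
      by_cases hn1 : n = 1
      · rw [if_pos hn1]; simp
      · rw [if_neg hn1]
        by_cases hp : n % 2 = 0 % 2
        · rw [if_pos hp]
          show touch k 0 (fun _ => false) (n/2) = false
          rw [ih]
        · rw [if_neg hp]

lemma exists_touch_list {k : ℕ} : ∀ {m : ℕ} (v : ℕ → Bool), 1 ≤ m → m ≤ 2^k →
    (∀ n, v n = true → 1 ≤ n ∧ n < m) →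
    ∃ L : List ℕ, L ≠ [] ∧ (∀ l ∈ L, l < m) ∧ touchFold k L (fun _ => false) = v := by
  induction k with
  | zero =>
      intro m v hm1 hm2 hv
      have hm : m = 1 := by simpa using hm2 |> fun h => by omega
      have hvf : v = fun _ => false := by
        funext n
        cases h : v n
        · rfl
        · have := hv n h; omega
      exact ⟨[0], by simp, by intro l hl; simp at hl; omega, by rw [hvf]; rfl⟩
  | succ k ih =>
      intro m v hm1 hm2 hv
      have hpow : (2:ℕ)^(k+1) = 2 * 2^k := by ring
      have hpos : 1 ≤ (2:ℕ)^k := Nat.one_le_two_pow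
      by_cases hm : m = 1
      · subst hm
        have hvf : v = fun _ => false := by
          funext n
          cases h : v n
          · rfl
          · have := hv n h; omega
        refine ⟨[0], by simp, by intro l hl; simp at hl; omega, ?_⟩
        rw [hvf, touchFold_cons, touch_zero_false, touchFold_nil]
      · -- m ≥ 2
        have hm2' : 2 ≤ m := by omega
        have hv0z : v 0 = false := by
          cases h : v 0
          · rfl
          · have := hv 0 h; omega
        -- side 0 data
        obtain ⟨L0, hL0ne, hL0lt, hL0⟩ := ih (m := (m+1)/2) (fun j => if j = 0 then false else v (2*j))
          (by omega) (by omega)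
          (by
            intro j hj
            replace hj : (if j = 0 then false else v (2*j)) = true := hj
            split at hj
            · simp at hj
            · have := hv (2*j) hj; omega)
        obtain ⟨L1, hL1ne, hL1lt, hL1⟩ := ih (m := m/2) (fun j => if j = 0 then false else v (2*j + 1))
          (by omega) (by omega)
          (by
            intro j hj
            replace hj : (if j = 0 then false else v (2*j+1)) = true := hj
            split at hj
            · simp at hj
            · have := hv (2*j+1) hj; omega)
        have main : ∀ (La Lb : List ℕ) (sa sb : ℕ), sa ≤ 1 → sb ≤ 1 → sa ≠ sb →
            (∀ l ∈ La, l < (m + 1 - sa)/2) → (∀ l ∈ Lb, l < (m + 1 - sb)/2) →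
            La ≠ [] → Lb ≠ [] →
            touchFold k La (fun _ => false) = (fun j => if j = 0 then false else v (2*j + sa)) →
            touchFold k Lb (fun _ => false) = (fun j => if j = 0 then false else v (2*j + sb)) →
            v 1 = decide (sb = 1) →
            ∃ L : List ℕ, L ≠ [] ∧ (∀ l ∈ L, l < m) ∧ touchFold (k+1) L (fun _ => false) = v := by
          intro La Lb sa sb hsa hsb hsab hLa hLb hane hbne hfa hfb hv1
          refine ⟨La.map (fun l => 2*l + sa) ++ Lb.map (fun l => 2*l + sb), by simp [hane], ?_, ?_⟩
          · intro l hl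
            simp only [List.mem_append, List.mem_map] at hl
            rcases hl with ⟨x, hx, rfl⟩ | ⟨x, hx, rfl⟩
            · have := hLa x hx; omega
            · have := hLb x hx; omega
          · rw [touchFold_append]
            funext n
            set W := touchFold (k+1) (La.map (fun l => 2*l + sa)) (fun _ => false) with hW
            rcases Nat.lt_or_ge n 2 with hn2 | hn2
            · interval_cases n
              · rw [touchFold_zero_idx, hW, touchFold_zero_idx]
                exact hv0z.symm
              · rw [touchFold_lift_one hsb _ _ hbne, hv1]
            · by_cases hpb : n % 2 = sb
              · rw [touchFold_lift_same hsb _ _ _ hn2 hpb]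
                have hWn : ((fun m' => W (2*m' + sb)) (n/2) : Bool) = (fun _ : ℕ => false) (n/2) := by
                  show W (2 * (n/2) + sb) = false
                  have e : 2 * (n/2) + sb = n := by omega
                  rw [e, hW, touchFold_lift_other hsa _ _ _ hn2 (by omega)]
                have hpt : touchFold k Lb (fun m' => W (2*m' + sb)) (n/2)
                    = touchFold k Lb (fun _ => false) (n/2) := touchFold_point hWn
                rw [hpt, hfb]
                show (if n / 2 = 0 then false else v (2 * (n/2) + sb)) = v n
                have : ¬ (n / 2 = 0) := by omega
                rw [if_neg this]
                congr 1
                omega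
              · rw [touchFold_lift_other hsb _ _ _ hn2 hpb, hW,
                    touchFold_lift_same hsa _ _ _ hn2 (by omega)]
                have hpt : touchFold k La (fun m' => (fun _ : ℕ => false) (2*m' + sa)) (n/2)
                    = touchFold k La (fun _ => false) (n/2) := touchFold_point rfl
                rw [hpt, hfa]
                show (if n / 2 = 0 then false else v (2 * (n/2) + sa)) = v n
                have : ¬ (n / 2 = 0) := by omega
                rw [if_neg this]
                congr 1
                omega
        cases hv1 : v 1
        · -- root bit false: side 1 first, then side 0
          exact main L1 L0 1 0 (by omega) (by omega) (by omega)
            (by intro l hl; have := hL1lt l hl; omega)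
            (by intro l hl; have := hL0lt l hl; omega)
            hL1ne hL0ne
            (by rw [hL1]) (by rw [hL0]; simp) (by simp [hv1])
        · -- root bit true: side 0 first, then side 1
          exact main L0 L1 0 1 (by omega) (by omega) (by omega)
            (by intro l hl; have := hL0lt l hl; omega)
            (by intro l hl; have := hL1lt l hl; omega)
            hL0ne hL1ne
            (by rw [hL0]; simp) (by rw [hL1]) (by simp [hv1])

lemma sOf_bit {k d r : ℕ} (v : ℕ → Bool) (hd : d < k) (hr : r < 2^d) :
    sOf k v r / 2^d % 2 = (if v (2^d + r) then 1 else 0) := by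
  induction k generalizing d r v with
  | zero => omega
  | succ k ih =>
      cases d with
      | zero =>
          have hr0 : r = 0 := by omega
          subst hr0
          rw [sOf_succ]
          have h2 : sOf k (fun m => v (2*m + 0 % 2)) (0 / 2) = sOf k (fun m => v (2*m + 0 % 2)) 0 := rfl
          simp only [pow_zero, Nat.div_one]
          split <;> omega
      | succ d =>
          rw [sOf_succ]
          have hp2 : (2:ℕ)^(d+1) = 2 * 2^d := by ring
          have hb : (if v 1 then 1 - r % 2 else r % 2) ≤ 1 := by split <;> omega
          have hdiv : ((if v 1 then 1 - r % 2 else r % 2) + 2 * sOf k (fun m => v (2*m + r % 2)) (r / 2)) / 2^(d+1)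
              = sOf k (fun m => v (2*m + r % 2)) (r / 2) / 2^d := by
            rw [hp2, ← Nat.div_div_eq_div_mul]
            congr 1
            omega
          rw [hdiv, ih (v := fun m => v (2*m + r % 2)) (by omega) (by omega)]
          have e : 2 * (2^d + r / 2) + r % 2 = 2^(d+1) + r := by omega
          simp only [e]

def relS (A k : ℕ) (s : ℕ → ℕ) (v : ℕ → Bool) : ℕ → ℕ :=
  fun b => if s b < A then sOf k v (s b) else s b

lemma updTrace_append (upd : ℕ → (ℕ → ℕ) → (ℕ → ℕ)) (t1 t2 : List ℕ) (c : ℕ → ℕ) :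
    updTrace upd (t1 ++ t2) c = updTrace upd t2 (updTrace upd t1 c) := by
  induction t1 generalizing c with
  | nil => rfl
  | cons b t ih => simp only [List.cons_append, updTrace]; exact ih _

lemma relS_false {k : ℕ} (s : ℕ → ℕ) : relS (2^k) k s (fun _ => false) = s := by
  funext b
  unfold relS
  split
  · exact sOf_false ‹_›
  · rfl

lemma upd_relS {k : ℕ} (s : ℕ → ℕ) (v : ℕ → Bool) (b : ℕ) (hb : s b < 2^k) :
    updPLRU (2^k) b (relS (2^k) k s v) = relS (2^k) k s (touch k (s b) v) := by
  have hhit : relS (2^k) k s v b < 2^k := by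
    unfold relS; rw [if_pos hb]; exact sOf_lt hb
  unfold updPLRU updPerm
  rw [if_pos hhit]
  funext b'
  by_cases h' : s b' < 2^k
  · have h2 : relS (2^k) k s v b' < 2^k := by
      unfold relS; rw [if_pos h']; exact sOf_lt h'
    rw [if_pos h2]
    show piPLRU (relS (2^k) k s v b) (relS (2^k) k s v b') = _
    unfold relS
    rw [if_pos hb, if_pos h', if_pos h']
    exact piPLRU_sOf v hb h'
  · have h2 : ¬ relS (2^k) k s v b' < 2^k := by
      unfold relS; rw [if_neg h']; exact h'
    rw [if_neg h2]
    show relS (2^k) k s v b' = _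
    unfold relS
    rw [if_neg h', if_neg h']

lemma trace_relS {k : ℕ} (B : Finset ℕ) (s : ℕ → ℕ) {m : ℕ}
    (hB : ∀ a, a < m → ∃ b ∈ B, s b = a) (hm : m ≤ 2^k) :
    ∀ (L : List ℕ), (∀ l ∈ L, l < m) → ∀ v : ℕ → Bool,
    ∃ t : List ℕ, (∀ b ∈ t, b ∈ (B : Set ℕ)) ∧
      updTrace (updPLRU (2^k)) t (relS (2^k) k s v) = relS (2^k) k s (touchFold k L v) := by
  intro L
  induction L with
  | nil => exact fun _ v => ⟨[], by simp, rfl⟩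
  | cons l L ih =>
      intro hL v
      have hlm : l < m := hL l (by simp)
      obtain ⟨b, hbB, hsb⟩ := hB l hlm
      obtain ⟨t, htB, htr⟩ := ih (fun x hx => hL x (by simp [hx])) (touch k l v)
      refine ⟨b :: t, ?_, ?_⟩
      · intro x hx
        rcases List.mem_cons.mp hx with rfl | hx
        · exact hbB
        · exact htB x hx
      · show updTrace (updPLRU (2^k)) t (updPLRU (2^k) b (relS (2^k) k s v)) = _
        rw [upd_relS s v b (by omega), hsb, touchFold_cons, htr]

/-- The valid bit-assignment sets -/
def VSet (fp : ℕ) : Set (ℕ → Bool) := {v | ∀ n, v n = true → 1 ≤ n ∧ n < fp}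

lemma touch_VSet {k fp l0 : ℕ} {v : ℕ → Bool} (hl0 : l0 < fp) (hv : v ∈ VSet fp) :
    touch k l0 v ∈ VSet fp := by
  intro n hn
  rcases Nat.eq_zero_or_pos n with rfl | hpos
  · rw [touch_zero_idx] at hn
    exact absurd (hv 0 hn).1 (by omega)
  · exact ⟨hpos, touch_supp hl0 (fun j hj hvj => (hv j hvj).2) n hpos hn⟩

theorem plru_case1 {k fp : ℕ} (B : Finset ℕ) (c : ℕ → ℕ)
    (hfp : B.card = fp) (hfill : FilledWith (2^k) c B) (h1 : 1 ≤ fp) (h2 : fp ≤ 2^k) :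
    (Reach (updPLRU (2^k)) ↑B c).ncard = 2 ^ (fp - 1) := by
  obtain ⟨hinv, hsurj, himg⟩ := hfill
  have hmin : min (2^k + 1) B.card = fp := by rw [hfp]; omega
  rw [hmin] at himg
  have hcB : ∀ b ∈ B, c b < fp := by
    intro b hb
    have : c b ∈ c '' ↑B := ⟨b, hb, rfl⟩
    rw [himg] at this
    exact this
  have hBc : ∀ a, a < fp → ∃ b ∈ B, c b = a := by
    intro a ha
    have : a ∈ c '' ↑B := by rw [himg]; exact ha
    obtain ⟨b, hb, hba⟩ := this
    exact ⟨b, hb, hba⟩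
  have hsub : ∀ (t : List ℕ), (∀ b ∈ t, b ∈ (B:Set ℕ)) → ∀ v ∈ VSet fp,
      updTrace (updPLRU (2^k)) t (relS (2^k) k c v) ∈ (relS (2^k) k c) '' (VSet fp) := by
    intro t
    induction t with
    | nil => exact fun _ v hv => ⟨v, hv, rfl⟩
    | cons b t ih =>
        intro hbt v hv
        have hbB : b ∈ B := hbt b (by simp)
        have hcb : c b < fp := hcB b hbB
        show updTrace _ t (updPLRU (2^k) b (relS (2^k) k c v)) ∈ _
        rw [upd_relS c v b (by omega)]
        exact ih (fun x hx => hbt x (by simp [hx])) _ (touch_VSet hcb hv)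
  have hEq : Reach (updPLRU (2^k)) ↑B c = (relS (2^k) k c) '' (VSet fp) := by
    apply Set.Subset.antisymm
    · rintro x ⟨t, htB, rfl⟩
      have hmem := hsub t htB (fun _ => false) (fun n hn => by simp at hn)
      rwa [relS_false] at hmem
    · rintro x ⟨v, hv, rfl⟩
      obtain ⟨L, _, hLlt, hLf⟩ := exists_touch_list (k := k) v h1 h2 (fun n hn => hv n hn)
      obtain ⟨t, htB, htr⟩ := trace_relS B c hBc h2 L hLlt (fun _ => false)
      rw [relS_false] at htr
      rw [hLf] at htr
      exact ⟨t, htB, htr⟩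
  have hinj : Set.InjOn (relS (2^k) k c) (VSet fp) := by
    intro v hv w hw hvw
    funext n
    rcases Nat.eq_zero_or_pos n with rfl | hn1
    · cases h : v 0
      · cases h2 : w 0
        · rfl
        · exact absurd (hw 0 h2).1 (by omega)
      · exact absurd (hv 0 h).1 (by omega)
    by_cases hnfp : n < fp
    · set d := Nat.log 2 n with hddef
      have hd1 : 2^d ≤ n := Nat.pow_log_le_self 2 (by omega)
      have hd2 : n < 2^(d+1) := Nat.lt_pow_succ_log_self (by norm_num) n
      have hsucc : (2:ℕ)^(d+1) = 2*2^d := by ring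
      have hdk : d < k := by
        by_contra hcon
        push_neg at hcon
        have : (2:ℕ)^k ≤ 2^d := Nat.pow_le_pow_right (by norm_num) hcon
        omega
      set r := n - 2^d with hrdef
      have hr : r < 2^d := by omega
      obtain ⟨b, hbB, hcb⟩ := hBc r (by omega)
      have hL : relS (2^k) k c v b = sOf k v r := by
        unfold relS; rw [if_pos (by omega), hcb]
      have hR : relS (2^k) k c w b = sOf k w r := by
        unfold relS; rw [if_pos (by omega), hcb]
      have h1v : sOf k v r = sOf k w r := by rw [← hL, ← hR, hvw]
      have hb1 := sOf_bit v hdk hr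
      have hb2 := sOf_bit w hdk hr
      rw [h1v] at hb1
      rw [hb1] at hb2
      have e : 2^d + r = n := by omega
      rw [e] at hb2
      cases hv' : v n <;> cases hw' : w n <;> simp [hv', hw'] at hb2 ⊢
    · cases h : v n
      · cases h2 : w n
        · rfl
        · exact absurd (hw n h2).2 (by omega)
      · exact absurd (hv n h).2 (by omega)
  rw [hEq, Set.ncard_image_of_injOn hinj]
  have e : VSet fp ≃ (↥(Finset.Ico 1 fp) → Bool) :=
    { toFun := fun v i => v.1 i.1
      invFun := fun f => ⟨fun n => if h : n ∈ Finset.Ico 1 fp then f ⟨n, h⟩ else false, by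
        intro n hn
        replace hn : (if h : n ∈ Finset.Ico 1 fp then f ⟨n, h⟩ else false) = true := hn
        by_cases h : n ∈ Finset.Ico 1 fp
        · simp only [Finset.mem_Ico] at h; omega
        · rw [dif_neg h] at hn; exact absurd hn (by simp)⟩
      left_inv := by
        intro v
        apply Subtype.ext
        funext n
        by_cases h : n ∈ Finset.Ico 1 fp
        · simp [h]
        · show (if h : n ∈ Finset.Ico 1 fp then v.1 n else false) = v.1 n
          rw [dif_neg h]
          cases hvn : v.1 n
          · rfl
          · exact absurd (Finset.mem_Ico.mpr ⟨(v.2 n hvn).1, (v.2 n hvn).2⟩) h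
      right_inv := by
        intro f
        funext i
        show (if h : i.1 ∈ Finset.Ico 1 fp then f ⟨i.1, h⟩ else false) = f i
        rw [dif_pos i.2] }
  rw [← Nat.card_coe_set_eq, Nat.card_congr e, Nat.card_eq_fintype_card,
    Fintype.card_fun, Fintype.card_coe, Nat.card_Ico, Fintype.card_bool]

/-! ### Case fp > A -/

def QS (A : ℕ) (B : Finset ℕ) : Set (ℕ → ℕ) :=
  {s | (∀ b, b ∉ B → s b = A) ∧ (∀ b, s b ≤ A) ∧ (∀ a, a < A → ∃ b ∈ B, s b = a) ∧
       (∀ b b', s b < A → s b = s b' → b = b')}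

lemma sOf_surj {k : ℕ} (v : ℕ → Bool) {a : ℕ} (ha : a < 2^k) :
    ∃ l, l < 2^k ∧ sOf k v l = a := by
  have hinj : Set.InjOn (sOf k v) ↑(Finset.range (2^k)) := by
    intro x hx y hy hxy
    simp only [Finset.coe_range, Set.mem_Iio] at hx hy
    exact sOf_inj hx hy hxy
  have hsub : Finset.image (sOf k v) (Finset.range (2^k)) ⊆ Finset.range (2^k) := by
    intro x hx
    simp only [Finset.mem_image, Finset.mem_range] at hx ⊢
    obtain ⟨l, hl, rfl⟩ := hx
    exact sOf_lt hl
  have hcard : (Finset.range (2^k)).card ≤ (Finset.image (sOf k v) (Finset.range (2^k))).card := by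
    rw [Finset.card_image_of_injOn hinj]
  have heq := Finset.eq_of_subset_of_card_le hsub hcard
  have : a ∈ Finset.image (sOf k v) (Finset.range (2^k)) := by
    rw [heq]; simpa using ha
  simp only [Finset.mem_image, Finset.mem_range] at this
  obtain ⟨l, hl, hla⟩ := this
  exact ⟨l, hl, hla⟩

lemma QS_relS {k : ℕ} {B : Finset ℕ} {s : ℕ → ℕ} (hs : s ∈ QS (2^k) B) (v : ℕ → Bool) :
    relS (2^k) k s v ∈ QS (2^k) B := by
  obtain ⟨h1, h2, h3, h4⟩ := hs
  refine ⟨?_, ?_, ?_, ?_⟩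
  · intro b hb
    unfold relS
    rw [if_neg (by rw [h1 b hb]; omega)]
    exact h1 b hb
  · intro b
    unfold relS
    split
    · exact le_of_lt (sOf_lt ‹_›)
    · exact h2 b
  · intro a ha
    obtain ⟨l, hl, hla⟩ := sOf_surj v ha
    obtain ⟨b, hbB, hsb⟩ := h3 l hl
    exact ⟨b, hbB, by unfold relS; rw [if_pos (by omega), hsb, hla]⟩
  · intro b b' hlt heq
    unfold relS at hlt heq
    by_cases hb : s b < 2^k
    · rw [if_pos hb] at hlt heq
      by_cases hb' : s b' < 2^k
      · rw [if_pos hb'] at heq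
        exact h4 b b' hb (sOf_inj hb hb' heq)
      · rw [if_neg hb'] at heq
        omega
    · rw [if_neg hb] at hlt
      omega

lemma upd_hit {k : ℕ} (s : ℕ → ℕ) (b : ℕ) (hb : s b < 2^k) :
    updPLRU (2^k) b s = relS (2^k) k s (touch k (s b) (fun _ => false)) := by
  have h := upd_relS s (fun _ => false) b hb
  rwa [relS_false] at h

def pushSt (A b : ℕ) (s : ℕ → ℕ) : ℕ → ℕ :=
  fun b' => if b' = b then 0 else if s b' < A then s b' + 1 else s b'

lemma QS_push {k : ℕ} {B : Finset ℕ} {s : ℕ → ℕ} (hs : s ∈ QS (2^k) B) {b : ℕ} (hb : b ∈ B)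
    (hmiss : ¬ s b < 2^k) : pushSt (2^k) b s ∈ QS (2^k) B := by
  obtain ⟨h1, h2, h3, h4⟩ := hs
  have hpos : 0 < 2^k := Nat.pow_pos (a := 2) (n := k) (by norm_num)
  refine ⟨?_, ?_, ?_, ?_⟩
  · intro b' hb'
    have hne : b' ≠ b := fun h => hb' (h ▸ hb)
    simp only [pushSt]
    rw [if_neg hne, if_neg (by rw [h1 b' hb']; omega)]
    exact h1 b' hb'
  · intro b'
    simp only [pushSt]
    split
    · omega
    · split
      · omega
      · exact h2 b'
  · intro a ha
    rcases Nat.eq_zero_or_pos a with rfl | hapos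
    · exact ⟨b, hb, by simp [pushSt]⟩
    · obtain ⟨b', hb'B, hsb'⟩ := h3 (a-1) (by omega)
      have hne : b' ≠ b := by intro h; rw [h] at hsb'; omega
      exact ⟨b', hb'B, by simp only [pushSt]; rw [if_neg hne, if_pos (by omega)]; omega⟩
  · intro x y hx hxy
    simp only [pushSt] at hx hxy
    by_cases hxb : x = b <;> by_cases hyb : y = b
    · rw [hxb, hyb]
    · rw [if_pos hxb] at hx hxy
      rw [if_neg hyb] at hxy
      by_cases cy : s y < 2^k
      · rw [if_pos cy] at hxy; omega
      · rw [if_neg cy] at hxy; have := h2 y; omega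
    · rw [if_neg hxb] at hx hxy
      rw [if_pos hyb] at hxy
      by_cases cx : s x < 2^k
      · rw [if_pos cx] at hx hxy; omega
      · rw [if_neg cx] at hx; omega
    · rw [if_neg hxb] at hx hxy
      rw [if_neg hyb] at hxy
      by_cases cx : s x < 2^k
      · rw [if_pos cx] at hx hxy
        by_cases cy : s y < 2^k
        · rw [if_pos cy] at hxy
          exact h4 x y cx (by omega)
        · rw [if_neg cy] at hxy; have := h2 y; omega
      · rw [if_neg cx] at hx; omega

lemma QS_upd {k : ℕ} {B : Finset ℕ} {s : ℕ → ℕ} (hs : s ∈ QS (2^k) B) {b : ℕ} (hb : b ∈ B) :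
    updPLRU (2^k) b s ∈ QS (2^k) B := by
  obtain ⟨h1, h2, h3, h4⟩ := hs
  by_cases hlt : s b < 2^k
  · rw [upd_hit s b hlt]
    exact QS_relS ⟨h1, h2, h3, h4⟩ _
  · -- miss
    have hform : updPLRU (2^k) b s = pushSt (2^k) b s := by
      unfold updPLRU updPerm pushSt
      rw [if_neg hlt]
    rw [hform]
    exact QS_push ⟨h1, h2, h3, h4⟩ hb hlt

def RF (A : ℕ) (B : Finset ℕ) (s t : ℕ → ℕ) : Prop :=
  ∃ tr : List ℕ, (∀ b ∈ tr, b ∈ (B : Set ℕ)) ∧ updTrace (updPLRU A) tr s = t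

lemma RF_refl (A : ℕ) (B : Finset ℕ) (s : ℕ → ℕ) : RF A B s s := ⟨[], by simp, rfl⟩

lemma RF_trans {A : ℕ} {B : Finset ℕ} {s t r : ℕ → ℕ} (h1 : RF A B s t) (h2 : RF A B t r) :
    RF A B s r := by
  obtain ⟨t1, h1B, h1e⟩ := h1
  obtain ⟨t2, h2B, h2e⟩ := h2
  refine ⟨t1 ++ t2, ?_, ?_⟩
  · intro b hbmem
    rcases List.mem_append.mp hbmem with h | h
    · exact h1B b h
    · exact h2B b h
  · rw [updTrace_append, h1e, h2e]

def posOf (A : ℕ) (s : ℕ → ℕ) (u b : ℕ) : ℕ := if b = u then A else s b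

def permApp {A : ℕ} (π : Equiv.Perm (Fin (A+1))) (p : ℕ) : ℕ :=
  if h : p < A + 1 then (π ⟨p, h⟩ : Fin (A+1)).val else p

def applyP (A : ℕ) (s : ℕ → ℕ) (u : ℕ) (π : Equiv.Perm (Fin (A+1))) : ℕ → ℕ :=
  fun b => if b = u ∨ s b < A then permApp π (posOf A s u b) else s b

lemma permApp_lt {A : ℕ} (π : Equiv.Perm (Fin (A+1))) {p : ℕ} (hp : p < A + 1) :
    permApp π p < A + 1 := by
  unfold permApp; rw [dif_pos hp]; exact (π ⟨p, hp⟩).isLt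

lemma permApp_mul {A : ℕ} (π' π : Equiv.Perm (Fin (A+1))) {p : ℕ} (hp : p < A + 1) :
    permApp (π' * π) p = permApp π' (permApp π p) := by
  have e1 : permApp π p = ((π ⟨p, hp⟩ : Fin (A+1)) : ℕ) := dif_pos hp
  have e2 : permApp (π' * π) p = (((π' * π) ⟨p, hp⟩ : Fin (A+1)) : ℕ) := dif_pos hp
  have e3 : permApp π' ((π ⟨p, hp⟩ : Fin (A+1)) : ℕ) = ((π' (π ⟨p, hp⟩) : Fin (A+1)) : ℕ) := by
    unfold permApp
    rw [dif_pos (π ⟨p, hp⟩).isLt, Fin.eta]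
  rw [e1, e2, e3, Equiv.Perm.mul_apply]

lemma permApp_inj {A : ℕ} (π : Equiv.Perm (Fin (A+1))) {p q : ℕ} (hp : p < A+1) (hq : q < A+1)
    (h : permApp π p = permApp π q) : p = q := by
  unfold permApp at h
  rw [dif_pos hp, dif_pos hq] at h
  have h2 := π.injective (Fin.ext h)
  simpa using h2

lemma posOf_lt {A : ℕ} {s : ℕ → ℕ} (h2 : ∀ b, s b ≤ A) (u b : ℕ) : posOf A s u b < A + 1 := by
  unfold posOf
  split
  · omega
  · have := h2 b; omega

lemma applyP_QS {A : ℕ} {B : Finset ℕ} {s : ℕ → ℕ} {u : ℕ} (hApos : 0 < A)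
    (hs : s ∈ QS A B) (hu : u ∈ B) (hsu : s u = A) (π : Equiv.Perm (Fin (A+1))) :
    applyP A s u π ∈ QS A B := by
  obtain ⟨h1, h2, h3, h4⟩ := hs
  refine ⟨?_, ?_, ?_, ?_⟩
  · intro b hb
    have hbu : b ≠ u := fun h => hb (h ▸ hu)
    unfold applyP
    rw [if_neg (by push_neg; exact ⟨hbu, le_of_eq (h1 b hb).symm⟩)]
    exact h1 b hb
  · intro b
    unfold applyP
    split
    · have := permApp_lt π (posOf_lt h2 u b); omega
    · exact h2 b
  · intro a ha
    set q : Fin (A+1) := π⁻¹ ⟨a, by omega⟩ with hqdef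
    have hπq : π q = ⟨a, by omega⟩ := Equiv.apply_symm_apply π _
    by_cases hqA : (q : ℕ) = A
    · refine ⟨u, hu, ?_⟩
      unfold applyP
      rw [if_pos (Or.inl rfl)]
      unfold posOf
      rw [if_pos rfl]
      unfold permApp
      rw [dif_pos (by omega)]
      have : (⟨A, by omega⟩ : Fin (A+1)) = q := by
        apply Fin.ext; simp [hqA]
      rw [this, hπq]
    · have hqlt : (q:ℕ) < A := by have := q.isLt; omega
      obtain ⟨b, hbB, hsb⟩ := h3 q.val hqlt
      have hbu : b ≠ u := by intro hc; rw [hc, hsu] at hsb; omega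
      refine ⟨b, hbB, ?_⟩
      unfold applyP
      rw [if_pos (Or.inr (by omega))]
      unfold posOf
      rw [if_neg hbu]
      unfold permApp
      rw [dif_pos (by omega)]
      have : (⟨s b, by omega⟩ : Fin (A+1)) = q := by apply Fin.ext; simp [hsb]
      rw [this, hπq]
  · intro x y hx hxy
    unfold applyP at hx hxy
    by_cases hgx : x = u ∨ s x < A
    · by_cases hgy : y = u ∨ s y < A
      · rw [if_pos hgx] at hx hxy
        rw [if_pos hgy] at hxy
        have hpp := permApp_inj π (posOf_lt h2 u x) (posOf_lt h2 u y) hxy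
        unfold posOf at hpp
        by_cases hxu : x = u
        · rw [if_pos hxu] at hpp
          by_cases hyu : y = u
          · rw [hxu, hyu]
          · rw [if_neg hyu] at hpp
            rcases hgy with hc | hc
            · exact absurd hc hyu
            · omega
        · rw [if_neg hxu] at hpp
          by_cases hyu : y = u
          · rw [if_pos hyu] at hpp
            rcases hgx with hc | hc
            · exact absurd hc hxu
            · omega
          · rw [if_neg hyu] at hpp
            rcases hgx with hc | hc
            · exact absurd hc hxu
            · exact h4 x y hc hpp
      · rw [if_neg hgy] at hxy
        rw [if_pos hgx] at hx hxy
        push_neg at hgy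
        omega
    · rw [if_neg hgx] at hx
      push_neg at hgx
      omega

def RealP (k : ℕ) (B : Finset ℕ) (π : Equiv.Perm (Fin (2^k+1))) : Prop :=
  ∀ s u, s ∈ QS (2^k) B → u ∈ B → s u = 2^k → RF (2^k) B s (applyP (2^k) s u π)

lemma RealP_one {k : ℕ} {B : Finset ℕ} : RealP k B 1 := by
  intro s u hs hu hsu
  have heq : applyP (2^k) s u 1 = s := by
    funext b
    unfold applyP
    by_cases hbu : b = u
    · rw [if_pos (Or.inl hbu)]
      unfold posOf permApp
      rw [if_pos hbu, dif_pos (by omega)]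
      simp [hbu, hsu]
    · by_cases hsb : s b < 2^k
      · rw [if_pos (Or.inr hsb)]
        unfold posOf permApp
        rw [if_neg hbu, dif_pos (by omega)]
        simp
      · rw [if_neg (by tauto)]
  rw [heq]
  exact RF_refl _ _ _

lemma RealP_mul {k : ℕ} {B : Finset ℕ} {π' π : Equiv.Perm (Fin (2^k+1))}
    (h : RealP k B π) (h' : RealP k B π') : RealP k B (π' * π) := by
  intro s u hs hu hsu
  have hApos : 0 < 2^k := Nat.pow_pos (a := 2) (by norm_num)
  obtain ⟨h1, h2, h3, h4⟩ := hs
  have hQ : s ∈ QS (2^k) B := ⟨h1, h2, h3, h4⟩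
  set q : Fin (2^k+1) := π⁻¹ ⟨2^k, by omega⟩ with hqdef
  have hπq : π q = ⟨2^k, by omega⟩ := Equiv.apply_symm_apply π _
  suffices H : ∀ b₀, b₀ ∈ B → (b₀ = u ∨ s b₀ < 2^k) → posOf (2^k) s u b₀ = (q:ℕ) →
      RF (2^k) B s (applyP (2^k) s u (π' * π)) by
    by_cases hqA : (q:ℕ) = 2^k
    · refine H u hu (Or.inl rfl) ?_
      unfold posOf; rw [if_pos rfl, hqA]
    · have hqlt : (q:ℕ) < 2^k := by have := q.isLt; omega
      obtain ⟨b₀, hb₀B, hsb₀⟩ := h3 q.val hqlt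
      have hb₀u : b₀ ≠ u := by intro hc; rw [hc, hsu] at hsb₀; omega
      refine H b₀ hb₀B (Or.inr (by omega)) ?_
      unfold posOf; rw [if_neg hb₀u]; exact hsb₀
  intro b₀ hb₀B hg₀ hp₀
  set t := applyP (2^k) s u π with ht
  have hRt : RF (2^k) B s t := h s u hQ hu hsu
  have hQt : t ∈ QS (2^k) B := applyP_QS hApos hQ hu hsu π
  have h5 : permApp π (posOf (2^k) s u b₀) = 2^k := by
    rw [hp₀]
    unfold permApp
    rw [dif_pos q.isLt]
    rw [Fin.eta, hπq]
  have htb₀ : t b₀ = 2^k := by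
    rw [ht]
    show (if b₀ = u ∨ s b₀ < 2^k then permApp π (posOf (2^k) s u b₀) else s b₀) = 2^k
    rw [if_pos hg₀, h5]
  have hkey : applyP (2^k) t b₀ π' = applyP (2^k) s u (π' * π) := by
    funext b
    by_cases hg : b = u ∨ s b < 2^k
    · have hRHS : applyP (2^k) s u (π' * π) b = permApp π' (permApp π (posOf (2^k) s u b)) := by
        unfold applyP
        rw [if_pos hg]
        exact permApp_mul π' π (posOf_lt h2 u b)
      by_cases hbb₀ : b = b₀
      · subst hbb₀
        have hLHS : applyP (2^k) t b π' b = permApp π' (2^k) := by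
          unfold applyP
          rw [if_pos (Or.inl rfl)]
          unfold posOf
          rw [if_pos rfl]
        rw [hLHS, hRHS, h5]
      · have hne_pos : posOf (2^k) s u b ≠ (q:ℕ) := by
          intro hcon
          apply hbb₀
          rcases hg with rfl | hsb
          · have hA : (q:ℕ) = 2^k := by
              rw [← hcon]; unfold posOf; rw [if_pos rfl]
            rcases hg₀ with rfl | hsb₀
            · rfl
            · exfalso
              rw [hA] at hp₀
              unfold posOf at hp₀
              split at hp₀ <;> omega
          · have hbu : b ≠ u := by intro hc; rw [hc, hsu] at hsb; omega
            have hsbq : s b = (q:ℕ) := by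
              rw [← hcon]; unfold posOf; rw [if_neg hbu]
            rcases hg₀ with rfl | hsb₀
            · exfalso
              unfold posOf at hp₀
              rw [if_pos rfl] at hp₀
              omega
            · have hb₀u : b₀ ≠ u := by intro hc; rw [hc, hsu] at hsb₀; omega
              unfold posOf at hp₀
              rw [if_neg hb₀u] at hp₀
              exact h4 b b₀ hsb (by omega)
        have hposlt : posOf (2^k) s u b < 2^k + 1 := posOf_lt h2 u b
        have htb : t b = permApp π (posOf (2^k) s u b) := by
          rw [ht]
          show (if b = u ∨ s b < 2^k then _ else s b) = _
          rw [if_pos hg]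
        have htblt : t b < 2^k := by
          have hle : permApp π (posOf (2^k) s u b) < 2^k + 1 := permApp_lt _ hposlt
          have hne : permApp π (posOf (2^k) s u b) ≠ 2^k := by
            intro hcon
            apply hne_pos
            unfold permApp at hcon
            rw [dif_pos hposlt] at hcon
            have he1 : π ⟨posOf (2^k) s u b, hposlt⟩ = ⟨2^k, by omega⟩ := Fin.ext hcon
            have he2 : (⟨posOf (2^k) s u b, hposlt⟩ : Fin (2^k+1)) = q := by
              rw [hqdef, ← he1]
              exact (Equiv.symm_apply_apply π _).symm
            exact congrArg Fin.val he2
          omega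
        have hLHS : applyP (2^k) t b₀ π' b = permApp π' (t b) := by
          unfold applyP
          rw [if_pos (Or.inr htblt)]
          unfold posOf
          rw [if_neg hbb₀]
        rw [hLHS, hRHS, htb]
    · push_neg at hg
      have htb : t b = s b := by
        rw [ht]
        show (if b = u ∨ s b < 2^k then _ else s b) = s b
        rw [if_neg (by push_neg; exact hg)]
      have hbb₀ : b ≠ b₀ := by
        intro hc
        subst hc
        rcases hg₀ with hc2 | hc2
        · exact hg.1 hc2
        · exact absurd hc2 (by omega)
      have hLHS : applyP (2^k) t b₀ π' b = t b := by
        unfold applyP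
        rw [if_neg (by push_neg; exact ⟨hbb₀, by rw [htb]; omega⟩)]
      rw [hLHS, htb]
      show _ = (if b = u ∨ s b < 2^k then _ else s b)
      rw [if_neg (by push_neg; exact hg)]
  rw [← hkey]
  exact RF_trans hRt (h' t b₀ hQt hb₀B htb₀)

def hFun (k : ℕ) (v : ℕ → Bool) (p : Fin (2^k+1)) : Fin (2^k+1) :=
  if h : (p:ℕ) < 2^k then ⟨sOf k v p, by have := sOf_lt (v := v) h; omega⟩ else p

lemma hFun_inj {k : ℕ} (v : ℕ → Bool) : Function.Injective (hFun k v) := by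
  intro p p' hpp'
  unfold hFun at hpp'
  by_cases h : (p:ℕ) < 2^k <;> by_cases h' : (p':ℕ) < 2^k
  · rw [dif_pos h, dif_pos h'] at hpp'
    exact Fin.ext (sOf_inj h h' (by simpa using hpp'))
  · rw [dif_pos h, dif_neg h'] at hpp'
    exfalso
    have hval := congrArg Fin.val hpp'
    have hlt := sOf_lt (v := v) h
    have hp2 := p'.isLt
    simp at hval
    omega
  · rw [dif_neg h, dif_pos h'] at hpp'
    exfalso
    have hval := congrArg Fin.val hpp'
    have hlt := sOf_lt (v := v) h'
    have hp2 := p.isLt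
    simp at hval
    omega
  · rw [dif_neg h, dif_neg h'] at hpp'
    exact hpp'

noncomputable def hPerm (k : ℕ) (v : ℕ → Bool) : Equiv.Perm (Fin (2^k+1)) :=
  Equiv.ofBijective (hFun k v) (Finite.injective_iff_bijective.mp (hFun_inj v))

lemma hPerm_val_lt {k : ℕ} {v : ℕ → Bool} {p : Fin (2^k+1)} (h : (p:ℕ) < 2^k) :
    ((hPerm k v p) : ℕ) = sOf k v p.val := by
  have he : hPerm k v p = hFun k v p := Equiv.ofBijective_apply _ _ _
  rw [he]
  unfold hFun
  rw [dif_pos h]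

lemma hPerm_val_ge {k : ℕ} {v : ℕ → Bool} {p : Fin (2^k+1)} (h : ¬ (p:ℕ) < 2^k) :
    hPerm k v p = p := by
  have he : hPerm k v p = hFun k v p := Equiv.ofBijective_apply _ _ _
  rw [he]
  unfold hFun
  rw [dif_neg h]

lemma RealP_hPerm {k : ℕ} {B : Finset ℕ} {v : ℕ → Bool} (hv : v ∈ VSet (2^k)) :
    RealP k B (hPerm k v) := by
  intro s u hQ hu hsu
  obtain ⟨h1, h2, h3, h4⟩ := hQ
  obtain ⟨L, hLne, hLlt, hLf⟩ := exists_touch_list (k := k) v Nat.one_le_two_pow le_rfl hv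
  obtain ⟨t, htB, htr⟩ := trace_relS B s h3 le_rfl L hLlt (fun _ => false)
  rw [relS_false, hLf] at htr
  refine ⟨t, htB, ?_⟩
  rw [htr]
  funext b
  show (if s b < 2^k then sOf k v (s b) else s b) = _
  unfold applyP
  by_cases hbu : b = u
  · rw [if_neg (by rw [hbu, hsu]; omega), if_pos (Or.inl hbu)]
    unfold posOf permApp
    rw [if_pos hbu, dif_pos (by omega)]
    rw [hPerm_val_ge (by simp)]
    rw [hbu, hsu]
  · by_cases hsb : s b < 2^k
    · rw [if_pos hsb, if_pos (Or.inr hsb)]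
      unfold posOf permApp
      rw [if_neg hbu, dif_pos (by omega)]
      rw [hPerm_val_lt (by simpa using hsb)]
    · rw [if_neg hsb, if_neg (by push_neg; exact ⟨hbu, by omega⟩)]

lemma finRotate_val_lt {A : ℕ} {y : Fin (A+1)} (h : (y:ℕ) < A) :
    ((finRotate (A+1) y) : ℕ) = (y:ℕ) + 1 := by
  rw [finRotate_succ_apply]
  exact Fin.val_add_one_of_lt (by rw [Fin.lt_def]; simpa using h)

lemma RealP_rho {k : ℕ} {B : Finset ℕ} : RealP k B (finRotate (2^k+1)) := by
  intro s u hQ hu hsu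
  obtain ⟨h1, h2, h3, h4⟩ := hQ
  refine ⟨[u], by simpa using hu, ?_⟩
  show updPLRU (2^k) u s = _
  unfold updPLRU updPerm
  rw [if_neg (by omega)]
  funext b
  unfold applyP posOf permApp
  by_cases hbu : b = u
  · rw [if_pos hbu, if_pos (Or.inl hbu), if_pos hbu, dif_pos (by omega)]
    have hlast : (⟨2^k, by omega⟩ : Fin (2^k+1)) = Fin.last (2^k) := rfl
    rw [finRotate_succ_apply, hlast, Fin.last_add_one]
    simp
  · rw [if_neg hbu]
    by_cases hsb : s b < 2^k
    · rw [if_pos hsb, if_pos (Or.inr hsb), if_neg hbu, dif_pos (by omega)]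
      have := finRotate_val_lt (A := 2^k) (y := ⟨s b, by omega⟩) (by simpa using hsb)
      rw [this]
    · rw [if_neg hsb, if_neg (by push_neg; exact ⟨hbu, by omega⟩)]

lemma sOf_single {k : ℕ} (hk : 1 ≤ k) {l : ℕ} (hl : l < 2^k) :
    sOf k (fun n => decide (n = 2^(k-1))) l =
      if l = 0 then 2^(k-1) else if l = 2^(k-1) then 0 else l := by
  induction k generalizing l with
  | zero => omega
  | succ K ihK =>
      by_cases hK : K = 0
      · subst hK
        interval_cases l
        · rfl
        · rfl
      · have hK1 : 1 ≤ K := by omega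
        have h2K : (2:ℕ)^K = 2 * 2^(K-1) := by
          conv_lhs => rw [show K = (K-1)+1 by omega]
          ring
        have hKpos : 0 < (2:ℕ)^K := Nat.pow_pos (a := 2) (by norm_num)
        have hKpos' : 0 < (2:ℕ)^(K-1) := Nat.pow_pos (a := 2) (by norm_num)
        rw [sOf_succ]
        have hv1 : (decide (1 = 2^(K+1-1)) : Bool) = false := by
          simp only [Nat.add_sub_cancel]
          simp only [decide_eq_false_iff_not]
          omega
        rw [hv1]
        simp only [Bool.false_eq_true, if_false]
        rcases Nat.mod_two_eq_zero_or_one l with hp | hp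
        · have hfn : sOf K (fun m => decide (2*m + l % 2 = 2^(K+1-1))) (l/2)
              = sOf K (fun m => decide (m = 2^(K-1))) (l/2) := by
            apply sOf_congr
            intro n _
            simp only [Nat.add_sub_cancel]
            exact decide_eq_decide.mpr (by omega)
          rw [hfn, ihK hK1 (by omega)]
          simp only [Nat.add_sub_cancel]
          by_cases hl0 : l = 0
          · rw [if_pos (by omega : l/2 = 0), if_pos hl0]
            omega
          · rw [if_neg (by omega : ¬ l/2 = 0), if_neg hl0]
            by_cases hlK : l = 2^K
            · rw [if_pos (by omega : l/2 = 2^(K-1)), if_pos hlK]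
              omega
            · rw [if_neg (by omega : ¬ l/2 = 2^(K-1)), if_neg hlK]
              omega
        · have hfn : sOf K (fun m => decide (2*m + l % 2 = 2^(K+1-1))) (l/2)
              = sOf K (fun _ => false) (l/2) := by
            apply sOf_congr
            intro n _
            simp only [Nat.add_sub_cancel, decide_eq_false_iff_not]
            omega
          rw [hfn, sOf_false (by omega : l/2 < 2^K)]
          simp only [Nat.add_sub_cancel]
          rw [if_neg (by omega : ¬ l = 0), if_neg (by omega : ¬ l = 2^K)]
          omega

lemma swap_eq_hPerm {k : ℕ} (hk : 1 ≤ k) :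
    Equiv.swap (⟨0, Nat.succ_pos _⟩ : Fin (2^k+1))
        ⟨2^(k-1), by have := Nat.pow_lt_pow_right (a := 2) one_lt_two (show k-1 < k by omega); omega⟩
      = hPerm k (fun n => decide (n = 2^(k-1))) := by
  have hlt : (2:ℕ)^(k-1) < 2^k := Nat.pow_lt_pow_right one_lt_two (by omega)
  have hpos : 0 < (2:ℕ)^(k-1) := Nat.pow_pos (a := 2) (by norm_num)
  apply Equiv.ext
  intro p
  by_cases hp : (p:ℕ) < 2^k
  · apply Fin.ext
    rw [hPerm_val_lt hp, sOf_single hk hp]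
    by_cases hp0 : (p:ℕ) = 0
    · have hpe : p = ⟨0, Nat.succ_pos _⟩ := Fin.ext hp0
      rw [hpe, Equiv.swap_apply_left, if_pos rfl]
    · by_cases hph : (p:ℕ) = 2^(k-1)
      · have hpe : p = ⟨2^(k-1), by omega⟩ := Fin.ext hph
        rw [hpe, Equiv.swap_apply_right, if_neg (by simpa using (by omega : ¬ (2:ℕ)^(k-1) = 0)), if_pos rfl]
      · rw [Equiv.swap_apply_of_ne_of_ne (fun hc => hp0 (by rw [hc])) (fun hc => hph (by rw [hc]))]
        rw [if_neg hp0, if_neg hph]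
  · rw [hPerm_val_ge hp]
    exact Equiv.swap_apply_of_ne_of_ne
      (fun hc => hp (by rw [hc]; simpa using Nat.pow_pos (a := 2) (n := k) (by norm_num)))
      (fun hc => hp (by rw [hc]; simpa using hlt))

lemma finRotate_pow_zero {A : ℕ} (m : ℕ) (hm : m ≤ A) :
    ((((finRotate (A+1))^m) (⟨0, Nat.succ_pos _⟩ : Fin (A+1))) : ℕ) = m := by
  induction m with
  | zero => simp
  | succ m ih =>
      rw [pow_succ']
      have hval := ih (by omega)
      show ((finRotate (A+1)) (((finRotate (A+1))^m) ⟨0, Nat.succ_pos _⟩) : ℕ) = m + 1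
      rw [finRotate_val_lt (by omega), hval]

lemma gens_top {k : ℕ} :
    Subgroup.closure ({π | (∃ v ∈ VSet (2^k), π = hPerm k v) ∨ π = finRotate (2^k+1)} :
      Set (Equiv.Perm (Fin (2^k+1)))) = ⊤ := by
  set S : Set (Equiv.Perm (Fin (2^k+1))) :=
    {π | (∃ v ∈ VSet (2^k), π = hPerm k v) ∨ π = finRotate (2^k+1)} with hSdef
  have hpos : 0 < (2:ℕ)^k := Nat.pow_pos (a := 2) (by norm_num)
  have hρS : finRotate (2^k+1) ∈ S := Or.inr rfl
  have hcard : Fintype.card (Fin (2^k+1)) = 2^k+1 := Fintype.card_fin _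
  have hc1 : Equiv.Perm.IsCycle (finRotate (2^k+1)) := by
    have := isCycle_finRotate (n := 2^k - 1)
    rwa [show (2:ℕ)^k - 1 + 2 = 2^k + 1 by omega] at this
  have hc2 : (finRotate (2^k+1)).support = Finset.univ := by
    have := support_finRotate (n := 2^k - 1)
    rwa [show (2:ℕ)^k - 1 + 2 = 2^k + 1 by omega] at this
  have hcop : Nat.Coprime (2^(k-1)) (Fintype.card (Fin (2^k+1))) := by
    rw [hcard]
    rcases Nat.eq_zero_or_pos k with rfl | hk
    · simpa using Nat.coprime_one_left _
    · apply Nat.Coprime.pow_left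
      rw [Nat.coprime_two_left]
      have h2K : (2:ℕ)^k = 2 * 2^(k-1) := by
        conv_lhs => rw [show k = (k-1)+1 from by omega]
        ring
      exact ⟨2^(k-1), by omega⟩
  have htop := Equiv.Perm.closure_cycle_coprime_swap (n := 2^(k-1)) hcop hc1 hc2 ⟨0, Nat.succ_pos _⟩
  have hswap_val : (((finRotate (2^k+1))^(2^(k-1))) (⟨0, Nat.succ_pos _⟩ : Fin (2^k+1))) =
      ⟨2^(k-1), by have : (2:ℕ)^(k-1) ≤ 2^k := Nat.pow_le_pow_right (by norm_num) (by omega); omega⟩ := by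
    apply Fin.ext
    exact finRotate_pow_zero _ (Nat.pow_le_pow_right (by norm_num) (by omega))
  have hswapS : Equiv.swap (⟨0, Nat.succ_pos _⟩ : Fin (2^k+1))
      (((finRotate (2^k+1))^(2^(k-1))) ⟨0, Nat.succ_pos _⟩) ∈ Subgroup.closure S := by
    rw [hswap_val]
    rcases Nat.eq_zero_or_pos k with rfl | hk
    · -- k = 0 : the swap equals finRotate 2
      have : Equiv.swap (⟨0, Nat.succ_pos _⟩ : Fin (2^0+1)) ⟨2^(0-1), by norm_num⟩ = finRotate (2^0+1) := by
        apply Equiv.ext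
        intro i
        fin_cases i <;> decide
      rw [this]
      exact Subgroup.subset_closure hρS
    · rw [swap_eq_hPerm hk]
      apply Subgroup.subset_closure
      exact Or.inl ⟨fun n => decide (n = 2^(k-1)), by
        intro n hn
        simp only [decide_eq_true_eq] at hn
        subst hn
        exact ⟨Nat.pow_pos (a := 2) (by norm_num), Nat.pow_lt_pow_right one_lt_two (by omega)⟩, rfl⟩
  apply le_antisymm le_top
  rw [← htop]
  apply (Subgroup.closure_le _).mpr
  intro x hx
  rcases hx with rfl | hx
  · exact Subgroup.subset_closure hρS
  · rw [Set.mem_singleton_iff] at hx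
    rw [hx]
    exact hswapS

lemma real_all {k : ℕ} {B : Finset ℕ} : ∀ π : Equiv.Perm (Fin (2^k+1)), RealP k B π := by
  intro π
  let M : Submonoid (Equiv.Perm (Fin (2^k+1))) :=
    { carrier := {π | RealP k B π}
      one_mem' := RealP_one
      mul_mem' := fun ha hb => RealP_mul hb ha }
  let G : Subgroup (Equiv.Perm (Fin (2^k+1))) :=
    { toSubmonoid := M
      inv_mem' := by
        intro x hx
        have hpos : 0 < orderOf x := orderOf_pos x
        have hinv : x⁻¹ = x ^ (orderOf x - 1) := by
          apply inv_eq_of_mul_eq_one_right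
          rw [← pow_succ', Nat.sub_add_cancel hpos]
          exact pow_orderOf_eq_one x
        rw [hinv]
        exact M.pow_mem hx _ }
  have hle : Subgroup.closure ({π | (∃ v ∈ VSet (2^k), π = hPerm k v) ∨ π = finRotate (2^k+1)} :
      Set (Equiv.Perm (Fin (2^k+1)))) ≤ G := by
    apply (Subgroup.closure_le _).mpr
    intro x hx
    rcases hx with ⟨v, hv, rfl⟩ | rfl
    · exact RealP_hPerm hv
    · exact RealP_rho
  have : π ∈ G := hle (by rw [gens_top]; trivial)
  exact this

lemma QS_card_filter {k : ℕ} {B : Finset ℕ} {s : ℕ → ℕ} (hs : s ∈ QS (2^k) B) :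
    (B.filter (fun b => s b < 2^k)).card = 2^k := by
  obtain ⟨h1, h2, h3, h4⟩ := hs
  have himg : Finset.image s (B.filter (fun b => s b < 2^k)) = Finset.range (2^k) := by
    ext a
    simp only [Finset.mem_image, Finset.mem_filter, Finset.mem_range]
    constructor
    · rintro ⟨b, ⟨_, hb⟩, rfl⟩; exact hb
    · intro ha
      obtain ⟨b, hbB, hsb⟩ := h3 a ha
      exact ⟨b, ⟨hbB, by omega⟩, hsb⟩
  have hinj : Set.InjOn s ↑(B.filter (fun b => s b < 2^k)) := by
    intro x hx y hy hxy
    simp only [Finset.coe_filter, Set.mem_setOf_eq] at hx hy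
    exact h4 x y hx.2 hxy
  rw [← Finset.card_image_of_injOn hinj, himg, Finset.card_range]

lemma QS_exists_uncached {k : ℕ} {B : Finset ℕ} {s : ℕ → ℕ} (hs : s ∈ QS (2^k) B)
    (hfp : 2^k < B.card) : ∃ u ∈ B, s u = 2^k := by
  by_contra hcon
  push_neg at hcon
  have hsub : B ⊆ B.filter (fun b => s b < 2^k) := by
    intro b hb
    rw [Finset.mem_filter]
    have hle := hs.2.1 b
    have hne := hcon b hb
    exact ⟨hb, by omega⟩
  have := Finset.card_le_card hsub
  rw [QS_card_filter hs] at this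
  omega

lemma QS_conn_zero {k : ℕ} {B : Finset ℕ} (hfp : 2^k < B.card) {s t : ℕ → ℕ}
    (hs : s ∈ QS (2^k) B) (ht : t ∈ QS (2^k) B)
    (hzero : (B.filter (fun b => s b < 2^k ∧ t b = 2^k)).card = 0) : RF (2^k) B s t := by
  have hsub : B.filter (fun b => s b < 2^k) ⊆ B.filter (fun b => t b < 2^k) := by
    intro b hb
    rw [Finset.mem_filter] at hb ⊢
    refine ⟨hb.1, ?_⟩
    by_contra hcon
    have htb : t b = 2^k := by have := ht.2.1 b; omega
    have hmem : b ∈ B.filter (fun b => s b < 2^k ∧ t b = 2^k) :=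
      Finset.mem_filter.mpr ⟨hb.1, hb.2, htb⟩
    rw [Finset.card_eq_zero] at hzero
    rw [hzero] at hmem
    simp at hmem
  have hCeq : B.filter (fun b => s b < 2^k) = B.filter (fun b => t b < 2^k) :=
    Finset.eq_of_subset_of_card_le hsub (by rw [QS_card_filter hs, QS_card_filter ht])
  obtain ⟨u, huB, hsu⟩ := QS_exists_uncached hs hfp
  have hQs := hs
  obtain ⟨hs1, hs2, hs3, hs4⟩ := hs
  obtain ⟨ht1, ht2, ht3, ht4⟩ := ht
  have hchoose_lt : ∀ (p : ℕ) (h : p < 2^k), t ((hs3 p h).choose) < 2^k := by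
    intro p h
    have hspec := (hs3 p h).choose_spec
    have hmem : (hs3 p h).choose ∈ B.filter (fun b => s b < 2^k) :=
      Finset.mem_filter.mpr ⟨hspec.1, by omega⟩
    rw [hCeq, Finset.mem_filter] at hmem
    exact hmem.2
  have hfval : ∀ (p : ℕ) (hp : p < 2^k) (b : ℕ), b ∈ B → s b = p → t ((hs3 p hp).choose) = t b := by
    intro p hp b hbB hsb
    congr 1
    apply hs4 _ _ (by rw [(hs3 p hp).choose_spec.2]; omega)
    rw [(hs3 p hp).choose_spec.2, hsb]
  set f : Fin (2^k+1) → Fin (2^k+1) :=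
    fun p => if h : (p:ℕ) < 2^k then ⟨t ((hs3 p h).choose), by have := hchoose_lt p h; omega⟩ else p
    with hf
  have hfinj : Function.Injective f := by
    intro p p' hpp'
    rw [hf] at hpp'
    simp only [] at hpp'
    by_cases h : (p:ℕ) < 2^k <;> by_cases h' : (p':ℕ) < 2^k
    · rw [dif_pos h, dif_pos h'] at hpp'
      have hval : t ((hs3 p h).choose) = t ((hs3 p' h').choose) := by simpa using hpp'
      have hbeq := ht4 _ _ (hchoose_lt p h) hval
      apply Fin.ext
      rw [← (hs3 p h).choose_spec.2, ← (hs3 p' h').choose_spec.2, hbeq]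
    · rw [dif_pos h, dif_neg h'] at hpp'
      exfalso
      have hval := congrArg Fin.val hpp'
      simp only [] at hval
      have := hchoose_lt p h
      have := p'.isLt
      omega
    · rw [dif_neg h, dif_pos h'] at hpp'
      exfalso
      have hval := congrArg Fin.val hpp'
      simp only [] at hval
      have := hchoose_lt p' h'
      have := p.isLt
      omega
    · rw [dif_neg h, dif_neg h'] at hpp'
      exact hpp'
  set π : Equiv.Perm (Fin (2^k+1)) :=
    Equiv.ofBijective f (Finite.injective_iff_bijective.mp hfinj) with hπ
  have hπapp : ∀ p, π p = f p := fun p => Equiv.ofBijective_apply _ _ _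
  have happ : applyP (2^k) s u π = t := by
    funext b
    unfold applyP posOf permApp
    by_cases hbu : b = u
    · rw [if_pos (Or.inl hbu), if_pos hbu, dif_pos (by omega)]
      rw [hπapp, hf]
      simp only []
      rw [dif_neg (by omega)]
      show (2:ℕ)^k = t b
      -- t u = 2^k
      have : ¬ t u < 2^k := by
        intro hcon
        have hmem : u ∈ B.filter (fun b => t b < 2^k) := Finset.mem_filter.mpr ⟨huB, hcon⟩
        rw [← hCeq, Finset.mem_filter] at hmem
        omega
      have := ht2 u
      rw [hbu]
      omega
    · by_cases hsb : s b < 2^k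
      · rw [if_pos (Or.inr hsb), if_neg hbu, dif_pos (by omega)]
        rw [hπapp, hf]
        simp only []
        rw [dif_pos (by simpa using hsb)]
        have hbB : b ∈ B := by
          by_contra hc
          have := hs1 b hc
          omega
        exact hfval _ (by simpa using hsb) b hbB rfl
      · rw [if_neg (by push_neg; exact ⟨hbu, by omega⟩)]
        -- s b = 2^k and t b = 2^k
        have hsbA : s b = 2^k := by have := hs2 b; omega
        by_cases hbB : b ∈ B
        · have : ¬ t b < 2^k := by
            intro hcon
            have hmem : b ∈ B.filter (fun b => t b < 2^k) := Finset.mem_filter.mpr ⟨hbB, hcon⟩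
            rw [← hCeq, Finset.mem_filter] at hmem
            omega
          have := ht2 b
          omega
        · rw [hsbA, (ht1 b hbB)]
  have := real_all (k := k) (B := B) π s u hQs huB hsu
  rwa [happ] at this

lemma QS_conn {k : ℕ} {B : Finset ℕ} (hfp : 2^k < B.card) :
    ∀ (n : ℕ) (s t : ℕ → ℕ), s ∈ QS (2^k) B → t ∈ QS (2^k) B →
    (B.filter (fun b => s b < 2^k ∧ t b = 2^k)).card ≤ n → RF (2^k) B s t := by
  intro n
  induction n with
  | zero =>
      intro s t hs ht h0
      exact QS_conn_zero hfp hs ht (by omega)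
  | succ n ih =>
      intro s t hs ht hcard
      by_cases h0 : (B.filter (fun b => s b < 2^k ∧ t b = 2^k)).card = 0
      · exact QS_conn_zero hfp hs ht h0
      · have hne : (B.filter (fun b => s b < 2^k ∧ t b = 2^k)).Nonempty :=
          Finset.card_pos.mp (by omega)
        obtain ⟨x, hx⟩ := hne
        rw [Finset.mem_filter] at hx
        obtain ⟨hxB, hsx, htx⟩ := hx
        have hy : ∃ y ∈ B, t y < 2^k ∧ s y = 2^k := by
          by_contra hcon
          push_neg at hcon
          have hsub : B.filter (fun b => t b < 2^k) ⊆ B.filter (fun b => s b < 2^k) := by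
            intro b hb
            rw [Finset.mem_filter] at hb ⊢
            refine ⟨hb.1, ?_⟩
            have h5 := hcon b hb.1 hb.2
            have h6 := hs.2.1 b
            omega
          have heq := Finset.eq_of_subset_of_card_le hsub
            (by rw [QS_card_filter hs, QS_card_filter ht])
          have hxmem : x ∈ B.filter (fun b => s b < 2^k) := Finset.mem_filter.mpr ⟨hxB, hsx⟩
          rw [← heq, Finset.mem_filter] at hxmem
          omega
        obtain ⟨y, hyB, hty, hsy⟩ := hy
        set π : Equiv.Perm (Fin (2^k+1)) :=
          Equiv.swap (⟨s x, by omega⟩ : Fin (2^k+1)) ⟨2^k, by omega⟩ with hπ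
        set s' := applyP (2^k) s y π with hs'def
        have hR1 : RF (2^k) B s s' := real_all (k := k) (B := B) π s y hs hyB hsy
        have hQs' : s' ∈ QS (2^k) B :=
          applyP_QS (Nat.pow_pos (a := 2) (by norm_num)) hs hyB hsy π
        have hdec : B.filter (fun b => s' b < 2^k ∧ t b = 2^k) ⊆
            (B.filter (fun b => s b < 2^k ∧ t b = 2^k)).erase x := by
          intro b hb
          rw [Finset.mem_filter] at hb
          obtain ⟨hbB, hs'b, htb⟩ := hb
          rw [Finset.mem_erase, Finset.mem_filter]
          have hby : b ≠ y := by intro hc; rw [hc] at htb; omega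
          have hsb : s b < 2^k := by
            by_contra hcon
            have hngu : ¬ (b = y ∨ s b < 2^k) := by push_neg; exact ⟨hby, by omega⟩
            have : s' b = s b := by
              rw [hs'def]; unfold applyP; rw [if_neg hngu]
            omega
          have hbx : b ≠ x := by
            intro hc
            subst hc
            have : s' b = 2^k := by
              rw [hs'def]; unfold applyP
              rw [if_pos (Or.inr hsb)]
              unfold posOf permApp
              rw [if_neg hby, dif_pos (by omega)]
              rw [hπ, Equiv.swap_apply_left]
            omega
          exact ⟨hbx, hbB, hsb, htb⟩
        have hcard' : (B.filter (fun b => s' b < 2^k ∧ t b = 2^k)).card ≤ n := by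
          have hd1 := Finset.card_le_card hdec
          have hd2 : x ∈ B.filter (fun b => s b < 2^k ∧ t b = 2^k) :=
            Finset.mem_filter.mpr ⟨hxB, hsx, htx⟩
          have hd3 := Finset.card_erase_of_mem hd2
          omega
        exact RF_trans hR1 (ih s' t hQs' ht hcard')

noncomputable def invS (k : ℕ) (B : Finset ℕ) (e : Fin (2^k) ↪ {x // x ∈ B}) (b : ℕ) : ℕ :=
  if h : ∃ a : Fin (2^k), ((e a : {x // x ∈ B}) : ℕ) = b then ((h.choose : Fin (2^k)) : ℕ) else 2^k

lemma invS_mem (k : ℕ) (B : Finset ℕ) (e : Fin (2^k) ↪ {x // x ∈ B}) :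
    invS k B e ∈ QS (2^k) B := by
  refine ⟨?_, ?_, ?_, ?_⟩
  · intro b hb
    unfold invS
    split
    · rename_i h
      exfalso
      obtain ⟨a, ha⟩ := h
      exact hb (ha ▸ (e a).2)
    · rfl
  · intro b
    unfold invS
    split
    · exact le_of_lt (Fin.isLt _)
    · exact le_rfl
  · intro a ha
    refine ⟨((e ⟨a, ha⟩ : {x // x ∈ B}) : ℕ), (e ⟨a, ha⟩).2, ?_⟩
    unfold invS
    split
    · rename_i h
      have hch : h.choose = ⟨a, ha⟩ := e.injective (Subtype.ext h.choose_spec)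
      rw [hch]
    · rename_i h
      exact absurd ⟨⟨a, ha⟩, rfl⟩ h
  · intro b b' hlt heq
    unfold invS at hlt heq
    split at hlt
    · rename_i h
      split at heq
      · rename_i hdup
        split at heq
        · rename_i h'
          have hch : hdup.choose = h'.choose := Fin.ext heq
          rw [← hdup.choose_spec, ← h'.choose_spec, hch]
        · omega
      · rename_i hdup
        exact absurd h hdup
    · omega

lemma invS_inj (k : ℕ) (B : Finset ℕ) (e : Fin (2^k) ↪ {x // x ∈ B}) :
    ∀ b b', invS k B e b < 2^k → invS k B e b = invS k B e b' → b = b' :=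
  (invS_mem k B e).2.2.2

lemma invS_apply_e (k : ℕ) (B : Finset ℕ) (e : Fin (2^k) ↪ {x // x ∈ B}) (a : Fin (2^k)) :
    invS k B e ((e a : {x // x ∈ B}) : ℕ) = a.val := by
  unfold invS
  split
  · rename_i h
    have hch : h.choose = a := e.injective (Subtype.ext h.choose_spec)
    rw [hch]
  · rename_i h
    exact absurd ⟨a, rfl⟩ h

noncomputable def QS_equiv (k : ℕ) (B : Finset ℕ) : (QS (2^k) B) ≃ (Fin (2^k) ↪ {x // x ∈ B}) where
  toFun s := ⟨fun a => ⟨(s.2.2.2.1 a.val a.isLt).choose, (s.2.2.2.1 a.val a.isLt).choose_spec.1⟩, by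
    intro a a' haa'
    have h1 := (s.2.2.2.1 a.val a.isLt).choose_spec.2
    have h2 := (s.2.2.2.1 a'.val a'.isLt).choose_spec.2
    apply Fin.ext
    rw [← h1, ← h2]
    exact congrArg s.1 (congrArg Subtype.val haa')⟩
  invFun e := ⟨invS k B e, invS_mem k B e⟩
  left_inv := by
    intro s
    apply Subtype.ext
    funext b
    show invS k B _ b = s.1 b
    unfold invS
    split
    · rename_i h
      have hspec := h.choose_spec
      simp only [Function.Embedding.coeFn_mk] at hspec
      have h2 := (s.2.2.2.1 (h.choose).val (h.choose).isLt).choose_spec.2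
      rw [show (s.2.2.2.1 (h.choose).val (h.choose).isLt).choose = b from hspec] at h2
      exact h2.symm
    · rename_i h
      have hle := s.2.2.1 b
      rcases Nat.lt_or_ge (s.1 b) (2^k) with hlt | hge
      · exfalso
        apply h
        refine ⟨⟨s.1 b, hlt⟩, ?_⟩
        show (s.2.2.2.1 (s.1 b) hlt).choose = b
        apply s.2.2.2.2 _ _ (by rw [(s.2.2.2.1 (s.1 b) hlt).choose_spec.2]; exact hlt)
        rw [(s.2.2.2.1 (s.1 b) hlt).choose_spec.2]
      · omega
  right_inv := by
    intro e
    apply DFunLike.ext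
    intro a
    apply Subtype.ext
    simp only [Function.Embedding.coeFn_mk]
    generalize_proofs hpf1
    have hch := (hpf1 a).choose_spec
    show (hpf1 a).choose = _
    apply invS_inj k B e
    · rw [hch.2]; exact a.isLt
    · rw [hch.2, invS_apply_e]

lemma QS_ncard {k : ℕ} {B : Finset ℕ} (hfp : 2^k < B.card) :
    (QS (2^k) B).ncard = B.card.factorial / (B.card - 2^k).factorial := by
  rw [← Nat.card_coe_set_eq, Nat.card_congr (QS_equiv k B), Nat.card_eq_fintype_card,
    Fintype.card_embedding_eq, Fintype.card_coe, Fintype.card_fin]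
  exact Nat.descFactorial_eq_div (le_of_lt hfp)

theorem plru_case2 {k fp : ℕ} (B : Finset ℕ) (c : ℕ → ℕ)
    (hfp : B.card = fp) (hfill : FilledWith (2^k) c B) (h2 : 2^k < fp) :
    (Reach (updPLRU (2^k)) ↑B c).ncard = fp.factorial / (fp - 2^k).factorial := by
  obtain ⟨⟨hle, hinj⟩, hsurj, himg⟩ := hfill
  have hmin : min (2^k + 1) B.card = 2^k + 1 := by rw [hfp]; omega
  rw [hmin] at himg
  have hcB : ∀ a, a < 2^k + 1 → ∃ b ∈ B, c b = a := by
    intro a ha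
    have : a ∈ c '' ↑B := by rw [himg]; exact ha
    obtain ⟨b, hb, hba⟩ := this
    exact ⟨b, hb, hba⟩
  have hcQ : c ∈ QS (2^k) B := by
    refine ⟨?_, hle, ?_, hinj⟩
    · intro b hb
      have hcb := hle b
      rcases Nat.lt_or_ge (c b) (2^k) with hlt | hge
      · exfalso
        obtain ⟨b', hb'B, hb'⟩ := hcB (c b) (by omega)
        have hbb := hinj b b' hlt hb'.symm
        exact hb (hbb ▸ hb'B)
      · omega
    · intro a ha
      exact hcB a (by omega)
  have hReach : Reach (updPLRU (2^k)) ↑B c = QS (2^k) B := by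
    apply Set.Subset.antisymm
    · rintro x ⟨t, htB, rfl⟩
      have hind : ∀ (t : List ℕ), (∀ b ∈ t, b ∈ (B : Set ℕ)) →
          ∀ s ∈ QS (2^k) B, updTrace (updPLRU (2^k)) t s ∈ QS (2^k) B := by
        intro t
        induction t with
        | nil => exact fun _ s hs => hs
        | cons b t ih =>
            intro hbt s hs
            exact ih (fun x hx => hbt x (by simp [hx])) _ (QS_upd hs (hbt b (by simp)))
      exact hind t htB c hcQ
    · intro x hx
      exact QS_conn (B := B) (by omega) _ c x hcQ hx le_rfl
  rw [hReach, QS_ncard (by omega), hfp]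

/-- For a PLRU cache of associativity `A` (a power of two) starting from a state
filled with a set `B` of `fp` blocks, the number of reachable cache states under
traces over `B` equals `2^(fp−1)` if `1 ≤ fp ≤ A`, and `fp!/(fp−A)!` if `fp > A`. -/
theorem abs_filled_plru (A fp : ℕ) (hpow : ∃ k, A = 2 ^ k) (B : Finset ℕ)
    (c : ℕ → ℕ) (hfp : B.card = fp) (hfill : FilledWith A c B) :
    (1 ≤ fp → fp ≤ A → (Reach (updPLRU A) ↑B c).ncard = 2 ^ (fp - 1)) ∧
    (A < fp → (Reach (updPLRU A) ↑B c).ncard = Nat.factorial fp / Nat.factorial (fp - A)) := by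
  obtain ⟨k, rfl⟩ := hpow
  constructor
  · intro h1 h2
    exact plru_case1 B c hfp hfill h1 h2
  · intro hlt
    exact plru_case2 B c hfp hfill hlt
end

section
/- For a deterministic Mealy machine with a fixed probing strategy att, define R_att(i) as the set of knowledge sets of all length-i probes following att. Then for every i, R_att(i) is a partition of S_v, and R_att(i+1) refines R_att(i). -/
/-- Run a Mealy machine along the inputs of a probe. -/
def mrun {S I O : Type*} (upd : I → S → S) : List (I × O) → S → S
  | [], s => s
  | io :: p, s => mrun upd p (upd io.1 s)

/-- A state `s` is coherent with a probe if the machine, started in `s`,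
produces the probe's observations on the probe's inputs. -/
def Coherent {S I O : Type*} (upd : I → S → S) (view : I → S → O) :
    List (I × O) → S → Prop
  | [], _ => True
  | io :: p, s => view io.1 s = io.2 ∧ Coherent upd view p (upd io.1 s)

/-- Knowledge set of a probe: the possible initial states coherent with it. -/
def Kset {S I O : Type*} (upd : I → S → S) (view : I → S → O) (Sv : Set S)
    (p : List (I × O)) : Set S :=
  {s ∈ Sv | Coherent upd view p s}

/-- Final knowledge set of a probe: states the machine may be in afterwards. -/
def FKset {S I O : Type*} (upd : I → S → S) (view : I → S → O) (Sv : Set S)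
    (p : List (I × O)) : Set S :=
  mrun upd p '' Kset upd view Sv p

/-- The probe's inputs follow the probing strategy `att`. -/
def Follows {I O : Type*} (att : List O → I) (p : List (I × O)) : Prop :=
  ∀ i (h : i < p.length), (p.get ⟨i, h⟩).1 = att ((p.map Prod.snd).take i)

/-- A probe of `att` is depleted if no realizable extension of it following `att`
refines its knowledge set. -/
def Depleted {S I O : Type*} (upd : I → S → S) (view : I → S → O) (Sv : Set S)
    (att : List O → I) (p : List (I × O)) : Prop :=
  Follows att p ∧ ∀ q, Follows att q → p <+: q → (Kset upd view Sv q).Nonempty →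
    Kset upd view Sv q = Kset upd view Sv p

/-- The knowledge sets produced by the depleted probes of strategy `att`. -/
def KnowledgeSets {S I O : Type*} (upd : I → S → S) (view : I → S → O)
    (Sv : Set S) (att : List O → I) : Set (Set S) :=
  {K | ∃ p, Depleted upd view Sv att p ∧ K = Kset upd view Sv p ∧ K.Nonempty}

/-- Cache observation: `true` for a hit, `false` for a miss. -/
def viewCache (A : ℕ) (b : ℕ) (c : ℕ → ℕ) : Bool := decide (c b < A)

/-!
Since the machine is deterministic and the strategy chooses each input from the outputs seen so
far, a state `s` determines the unique length-`i` probe following `att` that is coherent with it: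
feed `att` the outputs of the machine run from `s`. Hence two such probes sharing a state coincide,
and every state lies in the knowledge set of one of them. Refinement holds because coherence with a
probe implies coherence with each of its prefixes, and prefixes of probes following `att` follow
`att`.
-/

section Probes

variable {S I O : Type*} (upd : I → S → S) (view : I → S → O)

theorem follows_cons_iff (att : List O → I) (io : I × O) (p : List (I × O)) :
    Follows att (io :: p) ↔ io.1 = att [] ∧ Follows (fun os => att (io.2 :: os)) p := by
  constructor
  · intro h
    exact ⟨by simpa using h 0 p.length.succ_pos,
      fun i hi => by simpa using h (i + 1) (by simpa using hi)⟩
  · rintro ⟨h₀, h⟩ (_ | i) hi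
    · simpa using h₀
    · simpa using h i (by simpa using hi)

theorem Follows.of_isPrefix {att : List O → I} {p q : List (I × O)} (hq : Follows att q)
    (hpq : p <+: q) : Follows att p := by
  obtain ⟨r, rfl⟩ := hpq
  intro i hi
  have hi' : i ≤ (p.map Prod.snd).length := by simpa using hi.le
  simpa [List.getElem_append_left hi, List.take_append_of_le_length hi'] using
    hq i (by simp; omega)

theorem coherent_append (p q : List (I × O)) (s : S) :
    Coherent upd view (p ++ q) s ↔
      Coherent upd view p s ∧ Coherent upd view q (mrun upd p s) := by
  induction p generalizing s with
  | nil => simp [Coherent, mrun]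
  | cons io p ih => simp [Coherent, mrun, ih, and_assoc]

theorem kset_subset_kset_of_isPrefix (Sv : Set S) {p q : List (I × O)} (hpq : p <+: q) :
    Kset upd view Sv q ⊆ Kset upd view Sv p := by
  obtain ⟨r, rfl⟩ := hpq
  exact fun s ⟨hs, hc⟩ => ⟨hs, ((coherent_append upd view p r s).1 hc).1⟩

theorem Follows.eq_of_coherent {att : List O → I} {p q : List (I × O)} {s : S}
    (hp : Follows att p) (hq : Follows att q) (hlen : p.length = q.length)
    (hps : Coherent upd view p s) (hqs : Coherent upd view q s) : p = q := by
  induction p generalizing q att s with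
  | nil => exact (List.length_eq_zero_iff.1 hlen.symm).symm
  | cons io p ih =>
    obtain _ | ⟨jo, q⟩ := q
    · simp at hlen
    obtain ⟨hio, hp⟩ := (follows_cons_iff att io p).1 hp
    obtain ⟨hjo, hq⟩ := (follows_cons_iff att jo q).1 hq
    have hin : io.1 = jo.1 := hio.trans hjo.symm
    have hout : io.2 = jo.2 := by rw [← hps.1, ← hqs.1, hin]
    obtain rfl : io = jo := Prod.ext hin hout
    rw [ih hp hq (Nat.succ_injective hlen) hps.2 (hin ▸ hqs.2)]

def strategyProbe : ℕ → (List O → I) → S → List (I × O)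
  | 0, _, _ => []
  | n + 1, att, s =>
    (att [], view (att []) s) ::
      strategyProbe n (fun os => att (view (att []) s :: os)) (upd (att []) s)

theorem length_strategyProbe (n : ℕ) (att : List O → I) (s : S) :
    (strategyProbe upd view n att s).length = n := by
  induction n generalizing att s <;> simp [strategyProbe, *]

theorem follows_strategyProbe (n : ℕ) (att : List O → I) (s : S) :
    Follows att (strategyProbe upd view n att s) := by
  induction n generalizing att s with
  | zero => exact fun i hi => absurd hi (by simp [strategyProbe])
  | succ n ih => exact (follows_cons_iff att _ _).2 ⟨rfl, ih _ _⟩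

theorem coherent_strategyProbe (n : ℕ) (att : List O → I) (s : S) :
    Coherent upd view (strategyProbe upd view n att s) s := by
  induction n generalizing att s with
  | zero => trivial
  | succ n ih => exact ⟨rfl, ih _ _⟩

end Probes

/-- For every `i`, the family `R_att(i)` of knowledge sets of length-`i` probes
following the strategy `att` is a partition of `Sv` (distinct knowledge sets are
disjoint and every possible state is covered), and `R_att(i+1)` refines
`R_att(i)`. -/
theorem knowledge_sets_partition_and_refine {S I O : Type*}
    (upd : I → S → S) (view : I → S → O) (Sv : Set S) (att : List O → I) :
    ∀ i : ℕ,
      (∀ p q : List (I × O), p.length = i → q.length = i →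
        Follows att p → Follows att q →
        Kset upd view Sv p ≠ Kset upd view Sv q →
        Disjoint (Kset upd view Sv p) (Kset upd view Sv q)) ∧
      (∀ s ∈ Sv, ∃ p : List (I × O), p.length = i ∧ Follows att p ∧
        s ∈ Kset upd view Sv p) ∧
      (∀ q : List (I × O), q.length = i + 1 → Follows att q →
        ∃ p : List (I × O), p.length = i ∧ Follows att p ∧
          Kset upd view Sv q ⊆ Kset upd view Sv p) := by
  intro i
  refine ⟨?disjoint, ?cover, ?refine⟩
  case disjoint =>
    intro p q hp hq hfp hfq hne
    refine Set.disjoint_left.2 fun s hsp hsq => hne ?_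
    rw [hfp.eq_of_coherent upd view hfq (hp.trans hq.symm) hsp.2 hsq.2]
  case cover =>
    intro s hs
    exact ⟨strategyProbe upd view i att s, length_strategyProbe upd view i att s,
      follows_strategyProbe upd view i att s, hs, coherent_strategyProbe upd view i att s⟩
  case refine =>
    intro q hq hfq
    exact ⟨q.take i, by simp [hq], hfq.of_isPrefix (q.take_prefix i),
      kset_subset_kset_of_isPrefix upd view Sv (q.take_prefix i)⟩
end

section
/- For an LRU cache of associativity A and a shared-memory attacker, the maximum number of knowledge sets into which any probing strategy can partition any set of possible initial cache states is at most 2^A. -/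
namespace LRUX

/-- CacheInv is preserved by LRU updates. -/
lemma cacheInv_upd {A : ℕ} {s : ℕ → ℕ} (h : CacheInv A s) (b : ℕ) :
    CacheInv A (updLRU A b s) := by
  obtain ⟨h1, h2⟩ := h
  constructor
  · intro b'
    simp only [updLRU]
    split_ifs with hb hc
    · omega
    · have := h1 b'; have := h1 b; omega
    · exact h1 b'
  · intro x y hx hxy
    by_contra hne
    have hbA := h1 b
    have hxA := h1 x
    have hyA := h1 y
    simp only [updLRU] at hx hxy
    by_cases hxb : x = b
    · rw [if_pos hxb] at hx hxy
      by_cases hyb : y = b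
      · exact hne (hxb.trans hyb.symm)
      rw [if_neg hyb] at hxy
      by_cases hc : s y < min (s b) A
      · rw [if_pos hc] at hxy; omega
      · rw [if_neg hc] at hxy
        subst hxb
        exact hne (h2 x y (by omega) (by omega))
    · rw [if_neg hxb] at hx hxy
      by_cases hyb : y = b
      · rw [if_pos hyb] at hxy
        by_cases hc : s x < min (s b) A
        · rw [if_pos hc] at hx hxy; omega
        · rw [if_neg hc] at hx hxy
          subst hyb
          exact hne (h2 x y (by omega) (by omega))
      · rw [if_neg hyb] at hxy
        by_cases hc1 : s x < min (s b) A <;> by_cases hc2 : s y < min (s b) A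
        · rw [if_pos hc1] at hx hxy; rw [if_pos hc2] at hxy
          exact hne (h2 x y (by omega) (by omega))
        · rw [if_pos hc1] at hx hxy; rw [if_neg hc2] at hxy
          exact hyb (h2 y b (by omega) (by omega))
        · rw [if_neg hc1] at hx hxy; rw [if_pos hc2] at hxy
          exact hxb (h2 x b (by omega) (by omega))
        · rw [if_neg hc1] at hx hxy; rw [if_neg hc2] at hxy
          exact hne (h2 x y (by omega) hxy)

/-- Observation trace of strategy `att` run for `n` steps from state `s`. -/
def trc (A : ℕ) (att : List Bool → ℕ) : ℕ → (ℕ → ℕ) → List Bool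
  | 0, _ => []
  | n+1, s =>
    viewCache A (att []) s ::
      trc A (fun h => att (viewCache A (att []) s :: h)) n (updLRU A (att []) s)

lemma trc_length (A : ℕ) : ∀ (n : ℕ) (att : List Bool → ℕ) (s : ℕ → ℕ),
    (trc A att n s).length = n := by
  intro n
  induction n with
  | zero => intro att s; rfl
  | succ n ih => intro att s; simp [trc, ih]

lemma trc_take (A : ℕ) : ∀ (m n : ℕ) (att : List Bool → ℕ) (s : ℕ → ℕ), m ≤ n →
    (trc A att n s).take m = trc A att m s := by
  intro m
  induction m with
  | zero => intro n att s _; rfl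
  | succ m ih =>
    intro n att s hmn
    obtain ⟨n, rfl⟩ : ∃ n', n = n' + 1 := ⟨n - 1, by omega⟩
    simp only [trc, List.take_succ_cons]
    rw [ih n _ _ (by omega)]

/-- The core counting lemma: if `m` cache lines (ages `0..m-1`) are occupied by
known blocks `g 0, …, g (m-1)` uniformly across `T`, then at most `2 ^ (A - m)`
distinct observation traces of any fixed length are realizable from `T`. -/
lemma trc_card (A : ℕ) :
    ∀ (n k m : ℕ) (g : ℕ → ℕ) (att : List Bool → ℕ) (T : Set (ℕ → ℕ)),
      T.Finite → m + k = A →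
      (∀ s ∈ T, CacheInv A s ∧ ∀ j, j < m → s (g j) = j) →
      (trc A att n '' T).ncard ≤ 2 ^ k := by
  intro n
  induction n with
  | zero =>
    intro k m g att T hfin hmk hT
    have hsub : trc A att 0 '' T ⊆ {[]} := by rintro _ ⟨s, _, rfl⟩; rfl
    calc (trc A att 0 '' T).ncard ≤ ({[]} : Set (List Bool)).ncard :=
          Set.ncard_le_ncard hsub (Set.finite_singleton _)
      _ = 1 := Set.ncard_singleton _
      _ ≤ 2 ^ k := Nat.one_le_two_pow
  | succ n ih =>
    intro k m g att T hfin hmk hT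
    set b := att [] with hbdef
    set Th : Set (ℕ → ℕ) := {s ∈ T | viewCache A b s = true} with hThdef
    set Tm : Set (ℕ → ℕ) := {s ∈ T | viewCache A b s = false} with hTmdef
    have hThT : Th ⊆ T := fun s hs => hs.1
    have hTmT : Tm ⊆ T := fun s hs => hs.1
    have himg : trc A att (n+1) '' T =
        List.cons true '' (trc A (fun h => att (true :: h)) n '' (updLRU A b '' Th)) ∪
        List.cons false '' (trc A (fun h => att (false :: h)) n '' (updLRU A b '' Tm)) := by
      ext l
      constructor
      · rintro ⟨s, hs, rfl⟩
        by_cases hv : viewCache A b s = true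
        · left
          refine ⟨_, ⟨_, ⟨s, ⟨hs, hv⟩, rfl⟩, rfl⟩, ?_⟩
          simp only [trc, ← hbdef, hv]
        · have hv' : viewCache A b s = false := by
            simpa using hv
          right
          refine ⟨_, ⟨_, ⟨s, ⟨hs, hv'⟩, rfl⟩, rfl⟩, ?_⟩
          simp only [trc, ← hbdef, hv']
      · rintro (⟨_, ⟨_, ⟨s, ⟨hs, hv⟩, rfl⟩, rfl⟩, rfl⟩ | ⟨_, ⟨_, ⟨s, ⟨hs, hv⟩, rfl⟩, rfl⟩, rfl⟩)
        · exact ⟨s, hs, by simp only [trc, ← hbdef, hv]⟩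
        · exact ⟨s, hs, by simp only [trc, ← hbdef, hv]⟩
    rw [himg]
    have hconsT : Function.Injective (List.cons true) := List.cons_injective
    have hconsF : Function.Injective (List.cons false) := List.cons_injective
    by_cases hknown : ∃ i, i < m ∧ g i = b
    · -- access to a known block: uniform hit, associativity budget unchanged
      obtain ⟨i, him, hgi⟩ := hknown
      have hmA : m ≤ A := by omega
      have hhit : ∀ s ∈ T, viewCache A b s = true := by
        intro s hs
        have := (hT s hs).2 i him
        rw [hgi] at this
        simp [viewCache]; omega
      have hTm : Tm = ∅ := by
        ext s; simp only [hTmdef, Set.mem_setOf_eq, Set.mem_empty_iff_false, iff_false]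
        rintro ⟨hs, hv⟩; rw [hhit s hs] at hv; exact Bool.true_eq_false.mp hv
      have hTh : Th = T := by
        ext s; simp only [hThdef, Set.mem_setOf_eq]
        exact ⟨fun h => h.1, fun h => ⟨h, hhit s h⟩⟩
      rw [hTm, hTh]
      simp only [Set.image_empty, Set.union_empty]
      rw [Set.ncard_image_of_injective _ hconsT]
      refine ih k m (fun j => if j = 0 then b else if j ≤ i then g (j-1) else g j)
        _ _ (hfin.image _) hmk ?_
      rintro _ ⟨s, hs, rfl⟩
      obtain ⟨hinv, hg⟩ := hT s hs
      have hsb : s b = i := by rw [← hgi]; exact hg i him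
      refine ⟨cacheInv_upd hinv b, ?_⟩
      intro j hj
      by_cases hj0 : j = 0
      · subst hj0; simp [updLRU]
      · by_cases hji : j ≤ i
        · have hj1 : j - 1 < m := by omega
          have hne : g (j-1) ≠ b := by
            intro hcon
            have := hg (j-1) hj1
            rw [hcon, hsb] at this
            omega
          simp only [if_neg hj0, if_pos hji, updLRU, if_neg hne, hg (j-1) hj1, hsb]
          have : j - 1 < min i A := by omega
          rw [if_pos this]; omega
        · have hne : g j ≠ b := by
            intro hcon
            have := hg j hj
            rw [hcon, hsb] at this
            omega
          simp only [if_neg hj0, if_neg hji, updLRU, if_neg hne, hg j hj, hsb]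
          have : ¬ j < min i A := by omega
          rw [if_neg this]
    · -- access to a fresh block
      push_neg at hknown
      have hmA : m ≤ A := by omega
      have hge : ∀ s ∈ T, m ≤ s b := by
        intro s hs
        obtain ⟨hinv, hg⟩ := hT s hs
        by_contra hlt
        push_neg at hlt
        have h1 : s (g (s b)) = s b := hg (s b) hlt
        have := hinv.2 b (g (s b)) (by omega) h1.symm
        exact hknown (s b) hlt this.symm
      -- uniform step lemma for fresh accesses
      have hstep : ∀ s ∈ T, ∀ j, j < m + 1 →
          updLRU A b s (if j = 0 then b else g (j-1)) = j := by
        intro s hs j hj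
        obtain ⟨hinv, hg⟩ := hT s hs
        have hsbA : s b ≤ A := hinv.1 b
        have hsbm : m ≤ s b := hge s hs
        by_cases hj0 : j = 0
        · subst hj0; simp [updLRU]
        · have hj1 : j - 1 < m := by omega
          have hne : g (j-1) ≠ b := hknown (j-1) hj1
          simp only [if_neg hj0, updLRU, if_neg hne, hg (j-1) hj1]
          have : j - 1 < min (s b) A := by omega
          rw [if_pos this]; omega
      rcases Nat.eq_zero_or_pos k with hk0 | hkpos
      · -- cache fully known: uniform miss
        subst hk0
        have hmiss : ∀ s ∈ T, viewCache A b s = false := by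
          intro s hs
          have h1 := (hT s hs).1.1 b
          have h2 := hge s hs
          simp [viewCache]; omega
        have hTh : Th = ∅ := by
          ext s; simp only [hThdef, Set.mem_setOf_eq, Set.mem_empty_iff_false, iff_false]
          rintro ⟨hs, hv⟩; rw [hmiss s hs] at hv; exact Bool.false_eq_true.mp hv
        have hTm : Tm = T := by
          ext s; simp only [hTmdef, Set.mem_setOf_eq]
          exact ⟨fun h => h.1, fun h => ⟨h, hmiss s h⟩⟩
        rw [hTh, hTm]
        simp only [Set.image_empty, Set.empty_union]
        rw [Set.ncard_image_of_injective _ hconsF]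
        refine ih 0 m (fun j => if j = 0 then b else g (j-1)) _ _ (hfin.image _) hmk ?_
        rintro _ ⟨s, hs, rfl⟩
        exact ⟨cacheInv_upd (hT s hs).1 b, fun j hj => hstep s hs j (by omega)⟩
      · -- both outcomes possible: split, budget decreases
        obtain ⟨k', rfl⟩ : ∃ k', k = k' + 1 := ⟨k - 1, by omega⟩
        calc (List.cons true '' (trc A (fun h => att (true :: h)) n '' (updLRU A b '' Th)) ∪
              List.cons false '' (trc A (fun h => att (false :: h)) n '' (updLRU A b '' Tm))).ncard
            ≤ (List.cons true '' (trc A (fun h => att (true :: h)) n '' (updLRU A b '' Th))).ncard +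
              (List.cons false '' (trc A (fun h => att (false :: h)) n '' (updLRU A b '' Tm))).ncard :=
              Set.ncard_union_le _ _
          _ ≤ 2 ^ k' + 2 ^ k' := by
              gcongr
              · rw [Set.ncard_image_of_injective _ hconsT]
                refine ih k' (m+1) (fun j => if j = 0 then b else g (j-1)) _ _
                  ((hfin.subset hThT).image _) (by omega) ?_
                rintro _ ⟨s, hs, rfl⟩
                exact ⟨cacheInv_upd (hT s (hThT hs)).1 b,
                  fun j hj => hstep s (hThT hs) j hj⟩
              · rw [Set.ncard_image_of_injective _ hconsF]
                refine ih k' (m+1) (fun j => if j = 0 then b else g (j-1)) _ _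
                  ((hfin.subset hTmT).image _) (by omega) ?_
                rintro _ ⟨s, hs, rfl⟩
                exact ⟨cacheInv_upd (hT s (hTmT hs)).1 b,
                  fun j hj => hstep s (hTmT hs) j hj⟩
          _ = 2 ^ (k' + 1) := by ring

/-- The canonical probe of strategy `att` of length `n` generated by state `s`. -/
def probeOf (A : ℕ) (att : List Bool → ℕ) : ℕ → (ℕ → ℕ) → List (ℕ × Bool)
  | 0, _ => []
  | n+1, s =>
    (att [], viewCache A (att []) s) ::
      probeOf A (fun h => att (viewCache A (att []) s :: h)) n (updLRU A (att []) s)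

lemma probeOf_length (A : ℕ) : ∀ (n : ℕ) (att : List Bool → ℕ) (s : ℕ → ℕ),
    (probeOf A att n s).length = n := by
  intro n
  induction n with
  | zero => intro att s; rfl
  | succ n ih => intro att s; simp [probeOf, ih]

lemma probeOf_map_snd (A : ℕ) : ∀ (n : ℕ) (att : List Bool → ℕ) (s : ℕ → ℕ),
    (probeOf A att n s).map Prod.snd = trc A att n s := by
  intro n
  induction n with
  | zero => intro att s; rfl
  | succ n ih => intro att s; simp [probeOf, trc, ih]

lemma follows_cons {att : List Bool → ℕ} {b : ℕ} {o : Bool} {q : List (ℕ × Bool)} :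
    Follows att ((b, o) :: q) ↔ b = att [] ∧ Follows (fun h => att (o :: h)) q := by
  constructor
  · intro h
    constructor
    · simpa [Follows] using h 0 (by simp)
    · intro i hi
      have := h (i+1) (by simpa using Nat.succ_lt_succ hi)
      simpa using this
  · rintro ⟨hb, hq⟩ i hi
    cases i with
    | zero => simpa using hb
    | succ i =>
      have := hq i (by simpa using hi)
      simpa using this

lemma follows_probeOf (A : ℕ) : ∀ (n : ℕ) (att : List Bool → ℕ) (s : ℕ → ℕ),
    Follows att (probeOf A att n s) := by
  intro n
  induction n with
  | zero => intro att s i hi; simp [probeOf] at hi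
  | succ n ih =>
    intro att s
    exact follows_cons.mpr ⟨rfl, ih _ _⟩

lemma coherent_probeOf (A : ℕ) : ∀ (n : ℕ) (att : List Bool → ℕ) (s : ℕ → ℕ),
    Coherent (updLRU A) (viewCache A) (probeOf A att n s) s := by
  intro n
  induction n with
  | zero => intro att s; trivial
  | succ n ih => intro att s; exact ⟨rfl, ih _ _⟩

lemma probeOf_prefix (A : ℕ) : ∀ (m n : ℕ) (att : List Bool → ℕ) (s : ℕ → ℕ), m ≤ n →
    probeOf A att m s <+: probeOf A att n s := by
  intro m
  induction m with
  | zero => intro n att s _; exact List.nil_prefix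
  | succ m ih =>
    intro n att s hmn
    obtain ⟨n, rfl⟩ : ∃ n', n = n' + 1 := ⟨n - 1, by omega⟩
    simp only [probeOf]
    exact List.cons_prefix_cons.mpr ⟨rfl, ih n _ _ (by omega)⟩

lemma coherent_iff (A : ℕ) : ∀ (p : List (ℕ × Bool)) (att : List Bool → ℕ) (s : ℕ → ℕ),
    Follows att p →
    (Coherent (updLRU A) (viewCache A) p s ↔ trc A att p.length s = p.map Prod.snd) := by
  intro p
  induction p with
  | nil => intro att s _; simp [Coherent, trc]
  | cons io q ih =>
    obtain ⟨b, o⟩ := io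
    intro att s hf
    obtain ⟨hb, hq⟩ := follows_cons.mp hf
    subst hb
    simp only [Coherent, List.length_cons, List.map_cons, trc, List.cons.injEq]
    constructor
    · rintro ⟨h1, h2⟩
      refine ⟨h1, ?_⟩
      rw [show (fun h => att (viewCache A (att []) s :: h)) = fun h => att (o :: h) by rw [h1]]
      exact (ih _ _ hq).mp h2
    · rintro ⟨h1, h2⟩
      refine ⟨h1, ?_⟩
      rw [show (fun h => att (viewCache A (att []) s :: h)) = fun h => att (o :: h) by rw [h1]] at h2
      exact (ih _ _ hq).mpr h2

lemma eq_probeOf (A : ℕ) : ∀ (p : List (ℕ × Bool)) (att : List Bool → ℕ) (s : ℕ → ℕ),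
    Follows att p → Coherent (updLRU A) (viewCache A) p s →
    p = probeOf A att p.length s := by
  intro p
  induction p with
  | nil => intro att s _ _; rfl
  | cons io q ih =>
    obtain ⟨b, o⟩ := io
    intro att s hf hc
    obtain ⟨hb, hq⟩ := follows_cons.mp hf
    obtain ⟨h1, h2⟩ := hc
    subst hb
    simp only [probeOf, List.length_cons, List.cons.injEq]
    refine ⟨by rw [h1], ?_⟩
    rw [show (fun h => att (viewCache A (att []) s :: h)) = fun h => att (o :: h) by rw [h1]]
    exact ih _ _ hq h2

lemma kset_eq (A : ℕ) (Sv : Set (ℕ → ℕ)) (att : List Bool → ℕ) (p : List (ℕ × Bool))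
    (hf : Follows att p) :
    Kset (updLRU A) (viewCache A) Sv p =
      {s ∈ Sv | trc A att p.length s = p.map Prod.snd} := by
  ext s
  simp only [Kset, Set.mem_setOf_eq]
  exact and_congr_right fun _ => coherent_iff A p att s hf

lemma depleted_kset (A : ℕ) (Sv : Set (ℕ → ℕ)) (att : List Bool → ℕ) (p : List (ℕ × Bool))
    (hd : Depleted (updLRU A) (viewCache A) Sv att p) {s : ℕ → ℕ}
    (hs : s ∈ Kset (updLRU A) (viewCache A) Sv p) (n : ℕ) (hn : p.length ≤ n) :
    Kset (updLRU A) (viewCache A) Sv p = {s' ∈ Sv | trc A att n s' = trc A att n s} := by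
  obtain ⟨hfol, hdep⟩ := hd
  obtain ⟨hsSv, hcoh⟩ := hs
  have hp : p = probeOf A att p.length s := eq_probeOf A p att s hfol hcoh
  have hfq : Follows att (probeOf A att n s) := follows_probeOf A n att s
  have hpq : p <+: probeOf A att n s := hp ▸ probeOf_prefix A p.length n att s hn
  have hsq : s ∈ Kset (updLRU A) (viewCache A) Sv (probeOf A att n s) :=
    ⟨hsSv, coherent_probeOf A n att s⟩
  have heq := hdep (probeOf A att n s) hfq hpq ⟨s, hsq⟩
  rw [← heq, kset_eq A Sv att _ hfq, probeOf_length, probeOf_map_snd]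

end LRUX


/-- For an LRU cache of associativity `A` and a shared-memory attacker (who may
input any block), any probing strategy partitions any finite set of possible
initial cache states into at most `2^A` knowledge sets. -/
theorem lru_extraction_le (A : ℕ) (Sv : Set (ℕ → ℕ)) (hfin : Sv.Finite)
    (hinv : ∀ c ∈ Sv, CacheInv A c) (att : List Bool → ℕ) :
    (KnowledgeSets (updLRU A) (viewCache A) Sv att).ncard ≤ 2 ^ A := by
  classical
  set str : (ℕ → ℕ) → (ℕ → List Bool) := fun s n => LRUX.trc A att n s with hstrdef
  set KS := KnowledgeSets (updLRU A) (viewCache A) Sv att with hKSdef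
  set rep : Set (ℕ → ℕ) → (ℕ → ℕ) := fun K => if h : K.Nonempty then h.some else fun _ => 0
    with hrepdef
  have hrep : ∀ K : Set (ℕ → ℕ), K.Nonempty → rep K ∈ K := by
    intro K h
    simp only [hrepdef, dif_pos h]
    exact h.some_mem
  set F : Set (ℕ → List Bool) := str '' Sv with hFdef
  have hFfin : F.Finite := hfin.image _
  -- knowledge sets are determined by the observation streams of their representatives
  have hmem : ∀ K ∈ KS, rep K ∈ K ∧ K ⊆ Sv := by
    rintro K ⟨p, hd, rfl, hne⟩
    exact ⟨hrep _ hne, fun s hs => hs.1⟩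
  have key : ∀ K ∈ KS, ∀ K' ∈ KS, str (rep K) = str (rep K') → K = K' := by
    rintro K hK K' hK' hstr
    obtain ⟨p, hd, hKp, hne⟩ := hK
    obtain ⟨p', hd', hKp', hne'⟩ := hK'
    have h1 : rep K ∈ Kset (updLRU A) (viewCache A) Sv p := hKp ▸ hrep _ hne
    have h1' : rep K' ∈ Kset (updLRU A) (viewCache A) Sv p' := hKp' ▸ hrep _ hne'
    set N := max p.length p'.length with hN
    have e1 := LRUX.depleted_kset A Sv att p hd h1 N (le_max_left _ _)
    have e2 := LRUX.depleted_kset A Sv att p' hd' h1' N (le_max_right _ _)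
    rw [hKp, hKp', e1, e2]
    have : LRUX.trc A att N (rep K) = LRUX.trc A att N (rep K') := congrFun hstr N
    rw [this]
  -- hence KS injects into the set of streams F
  have h1 : KS.ncard ≤ F.ncard := by
    refine Set.ncard_le_ncard_of_injOn (fun K => str (rep K)) ?_ ?_ hFfin
    · intro K hK
      exact ⟨rep K, (hmem K hK).2 (hmem K hK).1, rfl⟩
    · intro K hK K' hK' h
      exact key K hK K' hK' h
  -- and F is no bigger than the set of traces at a single sufficiently large time N
  have hdex : ∀ f g : ℕ → List Bool, f ≠ g → ∃ n, f n ≠ g n := fun f g h =>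
    Function.ne_iff.mp h
  set d : (ℕ → List Bool) → (ℕ → List Bool) → ℕ :=
    fun f g => if h : f = g then 0 else (hdex f g h).choose with hddef
  have hd : ∀ f g : ℕ → List Bool, f ≠ g → f (d f g) ≠ g (d f g) := by
    intro f g h
    simp only [hddef, dif_neg h]
    exact (hdex f g h).choose_spec
  set Fs := hFfin.toFinset with hFsdef
  set N := Fs.sup (fun f => Fs.sup (d f)) with hNdef
  have hdN : ∀ f ∈ F, ∀ g ∈ F, d f g ≤ N := by
    intro f hf g hg
    calc d f g ≤ Fs.sup (d f) := Finset.le_sup (hFfin.mem_toFinset.mpr hg)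
      _ ≤ N := Finset.le_sup (f := fun f => Fs.sup (d f)) (hFfin.mem_toFinset.mpr hf)
  have hinj : Set.InjOn (fun f => f N) F := by
    rintro f hf g hg hfg
    by_contra hne
    apply hd f g hne
    have hle := hdN f hf g hg
    obtain ⟨s, _, rfl⟩ := hf
    obtain ⟨s', _, rfl⟩ := hg
    have e1 : str s (d (str s) (str s')) = (str s N).take (d (str s) (str s')) :=
      (LRUX.trc_take A _ N att s hle).symm
    have e2 : str s' (d (str s) (str s')) = (str s' N).take (d (str s) (str s')) :=
      (LRUX.trc_take A _ N att s' hle).symm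
    have hfg' : str s N = str s' N := hfg
    rw [e1, e2, hfg']
  have himgF : (fun f => f N) '' F = LRUX.trc A att N '' Sv := by
    ext l
    constructor
    · rintro ⟨f, ⟨s, hs, rfl⟩, rfl⟩
      exact ⟨s, hs, rfl⟩
    · rintro ⟨s, hs, rfl⟩
      exact ⟨str s, ⟨s, hs, rfl⟩, rfl⟩
  have h2 : F.ncard = (LRUX.trc A att N '' Sv).ncard := by
    rw [← himgF, Set.ncard_image_of_injOn hinj]
  have h3 : (LRUX.trc A att N '' Sv).ncard ≤ 2 ^ A := by
    refine LRUX.trc_card A N A 0 (fun _ => 0) att Sv hfin (by omega) ?_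
    intro s hs
    exact ⟨hinv s hs, fun j hj => by omega⟩
  omega
end
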